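/- arXiv:2403.13475 — 3 statements merged into one kernel-verified Lean document; each statement's English description precedes it below -/
import Mathlib

section
/- Let w ∈ L^∞(ℝ^N) be a nonnegative weight such that w_∞ = lim_{R→∞} (1/L^N(B(0,R))) ∫_{B(0,R)} w dL^N exists and is positive. Then the measure ν = w·L^N admits an asymptotic volume ratio of dimension N equal to w_∞ ω_N, and for all p ∈ [1,∞), u ∈ L^p(ℝ^N,ν): lim_{λ→0⁺} λ^p (ν⊗ν)({(x,y): |u(x)-u(y)| ≥ λ|x-y|^{N/p}}) = 2 w_∞ ω_N ‖u‖_{L^p(ν)}^p. -/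
open MeasureTheory Metric Filter Topology ENNReal

section Auxiliary

variable {N : ℕ}

theorem wbound (w : EuclideanSpace ℝ (Fin N) → ℝ)
    (hwbdd : MemLp w ⊤ (volume : Measure (EuclideanSpace ℝ (Fin N)))) :
    ∃ M : ℝ, 0 ≤ M ∧ ∀ᵐ x ∂(volume : Measure (EuclideanSpace ℝ (Fin N))), |w x| ≤ M := by
  refine ⟨(eLpNorm w ⊤ volume).toReal, ENNReal.toReal_nonneg, ?_⟩
  have h := hwbdd.2
  rw [eLpNorm_exponent_top] at h
  filter_upwards [ae_le_eLpNormEssSup (f := w) (μ := volume)] with x hx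
  calc |w x| = ((‖w x‖₊ : ENNReal)).toReal := by simp [Real.norm_eq_abs]
    _ ≤ (eLpNormEssSup w volume).toReal := ENNReal.toReal_mono h.ne hx
    _ = (eLpNorm w ⊤ volume).toReal := by rw [eLpNorm_exponent_top]

theorem nu_le (w : EuclideanSpace ℝ (Fin N) → ℝ) {M : ℝ}
    (hM : ∀ᵐ x ∂(volume : Measure (EuclideanSpace ℝ (Fin N))), |w x| ≤ M)
    (s : Set (EuclideanSpace ℝ (Fin N))) :
    (volume.withDensity fun x => ENNReal.ofReal (w x)) s ≤ ENNReal.ofReal M * volume s := by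
  set ν := volume.withDensity fun x => ENNReal.ofReal (w x)
  obtain ⟨t, hst, htm, hts⟩ := exists_measurable_superset volume s
  calc ν s ≤ ν t := measure_mono hst
    _ = ∫⁻ x in t, ENNReal.ofReal (w x) ∂volume := withDensity_apply _ htm
    _ ≤ ∫⁻ _ in t, ENNReal.ofReal M ∂volume := by
        refine setLIntegral_mono_ae (by fun_prop) ?_
        filter_upwards [hM] with x hx _
        exact ENNReal.ofReal_le_ofReal (le_trans (le_abs_self _) hx)
    _ = ENNReal.ofReal M * volume t := by simp [mul_comm]
    _ = ENNReal.ofReal M * volume s := by rw [hts]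

theorem nu_closedBall (hN : 0 < N) (w : EuclideanSpace ℝ (Fin N) → ℝ)
    (x : EuclideanSpace ℝ (Fin N)) (r : ℝ) :
    (volume.withDensity fun x => ENNReal.ofReal (w x)) (closedBall x r)
      = (volume.withDensity fun x => ENNReal.ofReal (w x)) (ball x r) := by
  haveI : Nonempty (Fin N) := ⟨⟨0, hN⟩⟩
  set ν := volume.withDensity fun x => ENNReal.ofReal (w x)
  refine le_antisymm ?_ (measure_mono ball_subset_closedBall)
  calc ν (closedBall x r) ≤ ν (ball x r ∪ sphere x r) := by
        refine measure_mono ?_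
        rw [← ball_union_sphere]
    _ ≤ ν (ball x r) + ν (sphere x r) := measure_union_le _ _
    _ = ν (ball x r) := by
        have h0 : volume (sphere x r) = 0 := Measure.addHaar_sphere _ x r
        have : ν (sphere x r) = 0 :=
          (withDensity_absolutelyContinuous volume _) h0
        simp [this]

theorem nu_toReal (w : EuclideanSpace ℝ (Fin N) → ℝ) (hw : Measurable w)
    (hwnn : ∀ᵐ x ∂(volume : Measure (EuclideanSpace ℝ (Fin N))), 0 ≤ w x)
    {M : ℝ} (hM : ∀ᵐ x ∂(volume : Measure (EuclideanSpace ℝ (Fin N))), |w x| ≤ M)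
    {s : Set (EuclideanSpace ℝ (Fin N))} (hs : MeasurableSet s) (hfin : volume s ≠ ⊤) :
    (volume.withDensity fun x => ENNReal.ofReal (w x)) s = ENNReal.ofReal (∫ x in s, w x) := by
  rw [withDensity_apply _ hs]
  have hint : IntegrableOn w s volume := by
    refine Integrable.mono' ((integrableOn_const (C := M) hfin))
      hw.aestronglyMeasurable.restrict ?_
    exact ae_restrict_of_ae (hM.mono fun x hx => by simpa [Real.norm_eq_abs] using hx)
  rw [← ofReal_integral_eq_lintegral_ofReal hint (ae_restrict_of_ae hwnn)]

-- central AVR, from t4's nu_toReal (assume it as hypothesis here for testing)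
theorem avr_center (hN : 0 < N) (w : EuclideanSpace ℝ (Fin N) → ℝ)
    (hnu : ∀ r : ℝ, 0 < r → ((volume.withDensity fun x => ENNReal.ofReal (w x))
        (ball (0 : EuclideanSpace ℝ (Fin N)) r)).toReal
      = ∫ x in ball (0 : EuclideanSpace ℝ (Fin N)) r, w x)
    (winf : ℝ)
    (hlim : Tendsto (fun R : ℝ =>
        (∫ x in ball (0 : EuclideanSpace ℝ (Fin N)) R, w x) /
          (volume (ball (0 : EuclideanSpace ℝ (Fin N)) R)).toReal)
      atTop (𝓝 winf)) :
    Tendsto (fun r : ℝ =>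
        ((volume.withDensity fun x => ENNReal.ofReal (w x))
          (ball (0 : EuclideanSpace ℝ (Fin N)) r)).toReal / r ^ (N : ℝ))
      atTop
      (𝓝 (winf * (volume (ball (0 : EuclideanSpace ℝ (Fin N)) 1)).toReal)) := by
  haveI : Nonempty (Fin N) := ⟨⟨0, hN⟩⟩
  set ωN := (volume (ball (0 : EuclideanSpace ℝ (Fin N)) 1)).toReal with hωN
  have hω0 : 0 < ωN := by
    apply ENNReal.toReal_pos (measure_ball_pos _ _ one_pos).ne' measure_ball_lt_top.ne
  refine (hlim.mul_const ωN).congr' ?_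
  filter_upwards [eventually_gt_atTop (0:ℝ)] with r hr
  have hvol : (volume (ball (0 : EuclideanSpace ℝ (Fin N)) r)).toReal = r ^ N * ωN := by
    rw [Measure.addHaar_ball _ _ hr.le, finrank_euclideanSpace_fin, ENNReal.toReal_mul,
      ENNReal.toReal_ofReal (by positivity)]
  rw [hnu r hr, hvol, Real.rpow_natCast]
  field_simp

-- shifted limit
theorem avr_shift (hN : 0 < N) (ν : Measure (EuclideanSpace ℝ (Fin N))) (W : ℝ)
    (h0 : Tendsto (fun r : ℝ => (ν (ball (0 : EuclideanSpace ℝ (Fin N)) r)).toReal / r ^ (N : ℝ))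
      atTop (𝓝 W)) (c : ℝ) :
    Tendsto (fun r : ℝ =>
        (ν (ball (0 : EuclideanSpace ℝ (Fin N)) (r + c))).toReal / r ^ (N : ℝ))
      atTop (𝓝 W) := by
  have h1 : Tendsto (fun r : ℝ =>
      ((ν (ball (0 : EuclideanSpace ℝ (Fin N)) (r + c))).toReal / (r + c) ^ (N : ℝ))
        * ((r + c) / r) ^ (N : ℝ)) atTop (𝓝 (W * 1)) := by
    refine Tendsto.mul (h0.comp (tendsto_atTop_add_const_right atTop c tendsto_id)) ?_
    have h2 : Tendsto (fun r : ℝ => (r + c) / r) atTop (𝓝 1) := by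
      have : Tendsto (fun r : ℝ => 1 + c / r) atTop (𝓝 (1 + 0)) :=
        tendsto_const_nhds.add (tendsto_const_nhds.div_atTop tendsto_id)
      rw [add_zero] at this
      refine this.congr' ?_
      filter_upwards [eventually_gt_atTop (0:ℝ)] with r hr
      field_simp
    have hc : ContinuousAt (fun x : ℝ => x ^ (N : ℝ)) 1 :=
      Real.continuousAt_rpow_const 1 _ (Or.inl one_ne_zero)
    have := (hc.tendsto.comp h2)
    simpa [Function.comp_def] using this
  rw [mul_one] at h1
  refine h1.congr' ?_
  filter_upwards [eventually_gt_atTop (max 0 (-c))] with r hr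
  have hr0 : 0 < r := lt_of_le_of_lt (le_max_left _ _) hr
  have hrc : 0 < r + c := by have := lt_of_le_of_lt (le_max_right _ _) hr; linarith
  rw [Real.div_rpow hrc.le hr0.le]
  field_simp

theorem avr_general (ν : Measure (EuclideanSpace ℝ (Fin N))) (W : ℝ)
    (hfin : ∀ (x : EuclideanSpace ℝ (Fin N)) (r : ℝ), ν (ball x r) ≠ ⊤)
    (hshift : ∀ c : ℝ, Tendsto (fun r : ℝ =>
        (ν (ball (0 : EuclideanSpace ℝ (Fin N)) (r + c))).toReal / r ^ (N : ℝ))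
      atTop (𝓝 W)) (x₀ : EuclideanSpace ℝ (Fin N)) :
    Tendsto (fun r : ℝ => (ν (ball x₀ r)).toReal / r ^ (N : ℝ)) atTop (𝓝 W) := by
  set d := ‖x₀‖
  refine tendsto_of_tendsto_of_tendsto_of_le_of_le' (hshift (-d)) (hshift d) ?_ ?_
  · filter_upwards [eventually_gt_atTop (0:ℝ)] with r hr
    have hsub : ball (0 : EuclideanSpace ℝ (Fin N)) (r + -d) ⊆ ball x₀ r := by
      apply ball_subset_ball'
      simp [dist_comm, dist_zero_right, d]
    have := ENNReal.toReal_mono (hfin x₀ r) (measure_mono hsub)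
    gcongr
  · filter_upwards [eventually_gt_atTop (0:ℝ)] with r hr
    have hsub : ball x₀ r ⊆ ball (0 : EuclideanSpace ℝ (Fin N)) (r + d) := by
      apply ball_subset_ball'
      simp [dist_zero_right, d]
    have := ENNReal.toReal_mono (hfin 0 (r + d)) (measure_mono hsub)
    gcongr

theorem rpow_cond {N : ℕ} (hN : 0 < N) {p lam d c : ℝ} (hp : 1 ≤ p)
    (hlam : 0 < lam) (hd : 0 ≤ d) (hc : 0 < c) :
    lam * d ^ ((N : ℝ) / p) ≤ c ↔ d ≤ (c / lam) ^ (p / (N : ℝ)) := by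
  have hp0 : (0:ℝ) < p := lt_of_lt_of_le one_pos hp
  have hN0 : (0:ℝ) < (N:ℝ) := Nat.cast_pos.2 hN
  constructor
  · intro h
    have h1 : d ^ ((N:ℝ)/p) ≤ c / lam := (le_div_iff₀' hlam).2 h
    have h2 := Real.rpow_le_rpow (Real.rpow_nonneg hd _) h1 (le_of_lt (by positivity :
      (0:ℝ) < p / N))
    rwa [← Real.rpow_mul hd, show (N:ℝ)/p * (p/(N:ℝ)) = 1 by field_simp, Real.rpow_one] at h2
  · intro h
    have h2 := Real.rpow_le_rpow hd h (le_of_lt (by positivity : (0:ℝ) < (N:ℝ) / p))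
    rw [← Real.rpow_mul (by positivity), show p/(N:ℝ) * ((N:ℝ)/p) = 1 by field_simp,
      Real.rpow_one] at h2
    calc lam * d ^ ((N:ℝ)/p) ≤ lam * (c / lam) := by
          exact mul_le_mul_of_nonneg_left h2 hlam.le
      _ = c := by field_simp

theorem cheby {α : Type*} [MeasurableSpace α] (ν : Measure α) (g : α → ℝ) (hg : Measurable g)
    {p : ℝ} (hp : 1 ≤ p)
    (hI : ∫⁻ y, ENNReal.ofReal (|g y| ^ p) ∂ν ≠ ⊤) {s : ℝ} (hs : 0 < s) :
    ν {y | s ≤ |g y|} ≠ ⊤ := by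
  intro htop
  have hm : MeasurableSet {y | s ≤ |g y|} := measurableSet_le measurable_const hg.abs
  have h1 : ENNReal.ofReal (s ^ p) * ν {y | s ≤ |g y|} ≤ ∫⁻ y, ENNReal.ofReal (|g y| ^ p) ∂ν := by
    calc ENNReal.ofReal (s ^ p) * ν {y | s ≤ |g y|}
        = ∫⁻ _ in {y | s ≤ |g y|}, ENNReal.ofReal (s ^ p) ∂ν := by simp [mul_comm]
      _ ≤ ∫⁻ y in {y | s ≤ |g y|}, ENNReal.ofReal (|g y| ^ p) ∂ν := by
          refine setLIntegral_mono (by fun_prop) fun y hy => ?_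
          exact ENNReal.ofReal_le_ofReal (Real.rpow_le_rpow hs.le hy (by linarith))
      _ ≤ _ := setLIntegral_le_lintegral _ _
  rw [htop, ENNReal.mul_top (by simp [ENNReal.ofReal_eq_zero]; positivity)] at h1
  exact hI (top_le_iff.1 h1)

theorem scaling (hN : 0 < N) (ν : Measure (EuclideanSpace ℝ (Fin N))) (W : ℝ)
    (hfin : ∀ (x : EuclideanSpace ℝ (Fin N)) (r : ℝ), ν (ball x r) ≠ ⊤)
    (hcb : ∀ (x : EuclideanSpace ℝ (Fin N)) (r : ℝ), ν (closedBall x r) = ν (ball x r))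
    (x : EuclideanSpace ℝ (Fin N))
    (havr : Tendsto (fun r : ℝ => (ν (ball x r)).toReal / r ^ (N : ℝ)) atTop (𝓝 W))
    {p : ℝ} (hp : 1 ≤ p) {c : ℝ} (hc : 0 < c) :
    Tendsto (fun lam : ℝ => ENNReal.ofReal (lam ^ p) *
        ν (closedBall x ((c / lam) ^ (p / (N : ℝ)))))
      (𝓝[>] (0:ℝ)) (𝓝 (ENNReal.ofReal (c ^ p * W))) := by
  have hp0 : (0:ℝ) < p := lt_of_lt_of_le one_pos hp
  have hN0 : (0:ℝ) < (N:ℝ) := Nat.cast_pos.2 hN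
  have hR : Tendsto (fun lam : ℝ => (c / lam) ^ (p / (N:ℝ))) (𝓝[>] (0:ℝ)) atTop := by
    refine (tendsto_rpow_atTop (by positivity)).comp ?_
    have h1 : Tendsto (fun lam : ℝ => c * lam⁻¹) (𝓝[>] (0:ℝ)) atTop :=
      tendsto_inv_nhdsGT_zero.const_mul_atTop hc
    refine h1.congr fun lam => by rw [div_eq_mul_inv]
  have hmain : Tendsto (fun lam : ℝ =>
      ENNReal.ofReal (c ^ p * ((ν (ball x ((c / lam) ^ (p / (N:ℝ))))).toReal
        / ((c / lam) ^ (p / (N:ℝ))) ^ (N:ℝ)))) (𝓝[>] (0:ℝ))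
      (𝓝 (ENNReal.ofReal (c ^ p * W))) :=
    (ENNReal.continuous_ofReal.tendsto _).comp ((havr.comp hR).const_mul _)
  refine hmain.congr' ?_
  filter_upwards [self_mem_nhdsWithin] with lam (hlam : 0 < lam)
  have hcl : 0 < c / lam := div_pos hc hlam
  set R := (c / lam) ^ (p / (N:ℝ)) with hRdef
  have hR0 : 0 < R := Real.rpow_pos_of_pos hcl _
  have hRN : R ^ (N:ℝ) = (c / lam) ^ p := by
    rw [hRdef, ← Real.rpow_mul hcl.le]
    congr 1
    field_simp
  have hkey : c ^ p * ((ν (ball x R)).toReal / R ^ (N:ℝ)) =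
      lam ^ p * (ν (ball x R)).toReal := by
    rw [hRN, Real.div_rpow hc.le hlam.le]
    have hl : lam ^ p ≠ 0 := by positivity
    field_simp
  rw [hkey, ENNReal.ofReal_mul (by positivity), ENNReal.ofReal_toReal (hfin x R), hcb]

theorem slice_limit (hN : 0 < N) {p : ℝ} (hp : 1 ≤ p)
    (ν : Measure (EuclideanSpace ℝ (Fin N))) (g : EuclideanSpace ℝ (Fin N) → ℝ) (W : ℝ)
    (hscal : ∀ (x : EuclideanSpace ℝ (Fin N)) {c : ℝ}, 0 < c →
      Tendsto (fun lam : ℝ => ENNReal.ofReal (lam ^ p) *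
          ν (closedBall x ((c / lam) ^ (p / (N : ℝ)))))
        (𝓝[>] (0:ℝ)) (𝓝 (ENNReal.ofReal (c ^ p * W))))
    (hK : ∀ s : ℝ, 0 < s → ν {y | s ≤ |g y|} ≠ ⊤)
    (x : EuclideanSpace ℝ (Fin N)) :
    Tendsto (fun lam : ℝ => ENNReal.ofReal (lam ^ p) *
        ν {y | |g y| < |g x| ∧ lam * dist x y ^ ((N : ℝ) / p) ≤ |g x - g y|})
      (𝓝[>] (0:ℝ)) (𝓝 (ENNReal.ofReal (|g x| ^ p * W))) := by
  have hp0 : (0:ℝ) < p := lt_of_lt_of_le one_pos hp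
  set t := |g x| with ht
  rcases eq_or_lt_of_le (abs_nonneg (g x)) with h0 | h0
  · -- t = 0 : the set is empty
    have hempty : ∀ lam : ℝ,
        {y | |g y| < |g x| ∧ lam * dist x y ^ ((N : ℝ) / p) ≤ |g x - g y|} = ∅ := by
      intro lam
      ext y
      simp only [Set.mem_setOf_eq, Set.mem_empty_iff_false, iff_false, not_and]
      intro hy
      exact absurd (lt_of_lt_of_le hy (le_of_eq h0.symm)) (not_lt.2 (abs_nonneg _))
    simp only [← ht] at hempty
    simp only [hempty, measure_empty, mul_zero]
    have htp : t ^ p = 0 := by rw [ht, ← h0, Real.zero_rpow hp0.ne']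
    rw [htp, zero_mul, ENNReal.ofReal_zero]
    exact tendsto_const_nhds
  · -- t > 0
    set F := fun lam : ℝ => ENNReal.ofReal (lam ^ p) *
        ν {y | |g y| < |g x| ∧ lam * dist x y ^ ((N : ℝ) / p) ≤ |g x - g y|} with hF
    set L := ENNReal.ofReal (t ^ p * W) with hL
    -- upper and lower bounds for each ε ∈ (0,1)
    have key : ∀ ε : ℝ, ε ∈ Set.Ioo (0:ℝ) 1 →
        Filter.limsup F (𝓝[>] (0:ℝ)) ≤ ENNReal.ofReal (((1+ε)*t) ^ p * W) ∧
        ENNReal.ofReal (((1-ε)*t) ^ p * W) ≤ Filter.liminf F (𝓝[>] (0:ℝ)) := by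
      intro ε hε
      obtain ⟨hε0, hε1⟩ := hε
      have hεt : 0 < ε * t := mul_pos hε0 h0
      set K := ν {y | ε * t ≤ |g y|} with hKdef
      have hKfin : K ≠ ⊤ := hK _ hεt
      set ψ := fun lam : ℝ => ENNReal.ofReal (lam ^ p) * K with hψ
      have hψ0 : Tendsto ψ (𝓝[>] (0:ℝ)) (𝓝 0) := by
        have h1 : Tendsto (fun lam : ℝ => ENNReal.ofReal (lam ^ p)) (𝓝[>] (0:ℝ)) (𝓝 0) := by
          rw [show (0:ℝ≥0∞) = ENNReal.ofReal (0 ^ p) by simp [Real.zero_rpow hp0.ne']]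
          refine (ENNReal.continuous_ofReal.tendsto _).comp ?_
          have hc : ContinuousAt (fun z : ℝ => z ^ p) 0 :=
            Real.continuousAt_rpow_const 0 p (Or.inr hp0.le)
          exact hc.tendsto.mono_left nhdsWithin_le_nhds
        simpa [hψ] using ENNReal.Tendsto.mul_const h1 (Or.inr hKfin)
      constructor
      · -- limsup bound
        have hup : ∀ lam : ℝ, 0 < lam → F lam ≤
            ENNReal.ofReal (lam ^ p) * ν (closedBall x (((1+ε)*t / lam) ^ (p / (N:ℝ)))) +
              ψ lam := by
          intro lam hlam
          have hsub : {y | |g y| < |g x| ∧ lam * dist x y ^ ((N : ℝ) / p) ≤ |g x - g y|} ⊆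
              closedBall x (((1+ε)*t / lam) ^ (p / (N:ℝ))) ∪ {y | ε * t ≤ |g y|} := by
            intro y hy
            obtain ⟨hy1, hy2⟩ := hy
            by_cases hcase : ε * t ≤ |g y|
            · exact Or.inr hcase
            · push_neg at hcase
              left
              rw [mem_closedBall, dist_comm]
              refine (rpow_cond hN hp hlam dist_nonneg (by positivity)).1 ?_
              calc lam * dist x y ^ ((N : ℝ) / p) ≤ |g x - g y| := hy2
                _ ≤ |g x| + |g y| := abs_sub _ _
                _ ≤ t + ε * t := by rw [← ht]; exact add_le_add le_rfl hcase.le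
                _ = (1+ε)*t := by ring
          calc F lam ≤ ENNReal.ofReal (lam ^ p) *
                (ν (closedBall x (((1+ε)*t / lam) ^ (p / (N:ℝ)))) + K) := by
                refine mul_le_mul_right ((measure_mono hsub).trans (measure_union_le _ _)) _
            _ = _ := by rw [mul_add]
        have hlim : Tendsto (fun lam : ℝ =>
            ENNReal.ofReal (lam ^ p) * ν (closedBall x (((1+ε)*t / lam) ^ (p / (N:ℝ)))) +
              ψ lam) (𝓝[>] (0:ℝ)) (𝓝 (ENNReal.ofReal (((1+ε)*t) ^ p * W) + 0)) :=
          (hscal x (by positivity)).add hψ0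
        rw [add_zero] at hlim
        calc Filter.limsup F (𝓝[>] (0:ℝ)) ≤ Filter.limsup (fun lam =>
              ENNReal.ofReal (lam ^ p) * ν (closedBall x (((1+ε)*t / lam) ^ (p / (N:ℝ)))) +
                ψ lam) (𝓝[>] (0:ℝ)) := by
              refine Filter.limsup_le_limsup ?_
              filter_upwards [self_mem_nhdsWithin] with lam hlam
              exact hup lam hlam
          _ = _ := hlim.limsup_eq
      · -- liminf bound
        have hdown : ∀ lam : ℝ, 0 < lam →
            ENNReal.ofReal (lam ^ p) * ν (closedBall x (((1-ε)*t / lam) ^ (p / (N:ℝ)))) ≤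
              F lam + ψ lam := by
          intro lam hlam
          have hsub : closedBall x (((1-ε)*t / lam) ^ (p / (N:ℝ))) ⊆
              {y | |g y| < |g x| ∧ lam * dist x y ^ ((N : ℝ) / p) ≤ |g x - g y|} ∪
                {y | ε * t ≤ |g y|} := by
            intro y hy
            rw [mem_closedBall, dist_comm] at hy
            by_cases hcase : ε * t ≤ |g y|
            · exact Or.inr hcase
            · push_neg at hcase
              left
              have h1t : (0:ℝ) < (1-ε)*t := by
                have : (0:ℝ) < 1 - ε := by linarith
                positivity
              refine ⟨lt_of_lt_of_le hcase (by nlinarith), ?_⟩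
              calc lam * dist x y ^ ((N : ℝ) / p) ≤ (1-ε)*t :=
                    (rpow_cond hN hp hlam dist_nonneg h1t).2 hy
                _ ≤ |g x| - |g y| := by rw [← ht]; nlinarith
                _ ≤ |g x - g y| := abs_sub_abs_le_abs_sub _ _
          calc ENNReal.ofReal (lam ^ p) * ν (closedBall x (((1-ε)*t / lam) ^ (p / (N:ℝ))))
              ≤ ENNReal.ofReal (lam ^ p) *
                (ν {y | |g y| < |g x| ∧ lam * dist x y ^ ((N : ℝ) / p) ≤ |g x - g y|} + K) :=
                mul_le_mul_right ((measure_mono hsub).trans (measure_union_le _ _)) _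
            _ = F lam + ψ lam := by rw [mul_add]
        have h1t : (0:ℝ) < (1-ε)*t := by
          have : (0:ℝ) < 1 - ε := by linarith
          positivity
        have hlim : Tendsto (fun lam : ℝ =>
            ENNReal.ofReal (lam ^ p) * ν (closedBall x (((1-ε)*t / lam) ^ (p / (N:ℝ)))) -
              ψ lam) (𝓝[>] (0:ℝ)) (𝓝 (ENNReal.ofReal (((1-ε)*t) ^ p * W) - 0)) := by
          refine ENNReal.Tendsto.sub (hscal x h1t) hψ0 (Or.inr ?_)
          simp
        rw [tsub_zero] at hlim
        calc ENNReal.ofReal (((1-ε)*t) ^ p * W)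
            = Filter.liminf (fun lam : ℝ =>
                ENNReal.ofReal (lam ^ p) * ν (closedBall x (((1-ε)*t / lam) ^ (p / (N:ℝ)))) -
                  ψ lam) (𝓝[>] (0:ℝ)) := hlim.liminf_eq.symm
          _ ≤ Filter.liminf F (𝓝[>] (0:ℝ)) := by
              refine Filter.liminf_le_liminf ?_
              filter_upwards [self_mem_nhdsWithin] with lam hlam
              exact tsub_le_iff_right.2 (hdown lam hlam)
    -- let ε → 0
    have hlimsup : Filter.limsup F (𝓝[>] (0:ℝ)) ≤ L := by
      have hcont : Tendsto (fun ε : ℝ => ENNReal.ofReal (((1+ε)*t) ^ p * W)) (𝓝[>] (0:ℝ))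
          (𝓝 L) := by
        rw [hL]
        refine (ENNReal.continuous_ofReal.tendsto _).comp ?_
        have h1 : ContinuousAt (fun ε : ℝ => ((1+ε)*t) ^ p * W) 0 := by
          have hb : ContinuousAt (fun ε : ℝ => (1+ε)*t) 0 := by fun_prop
          exact (hb.rpow_const (Or.inr hp0.le)).mul continuousAt_const
        have h3 : Tendsto (fun ε : ℝ => ((1+ε)*t) ^ p * W) (𝓝[>] (0:ℝ)) (𝓝 (t ^ p * W)) := by
          have := h1.tendsto.mono_left (nhdsWithin_le_nhds (s := Set.Ioi (0:ℝ)))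
          simpa using this
        exact h3
      refine ge_of_tendsto hcont ?_
      filter_upwards [Ioo_mem_nhdsGT_of_mem (by simp : (0:ℝ) ∈ Set.Ico (0:ℝ) 1)] with ε hε
      exact (key ε hε).1
    have hliminf : L ≤ Filter.liminf F (𝓝[>] (0:ℝ)) := by
      have hcont : Tendsto (fun ε : ℝ => ENNReal.ofReal (((1-ε)*t) ^ p * W)) (𝓝[>] (0:ℝ))
          (𝓝 L) := by
        rw [hL]
        refine (ENNReal.continuous_ofReal.tendsto _).comp ?_
        have h1 : ContinuousAt (fun ε : ℝ => ((1-ε)*t) ^ p * W) 0 := by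
          have hb : ContinuousAt (fun ε : ℝ => (1-ε)*t) 0 := by fun_prop
          exact (hb.rpow_const (Or.inr hp0.le)).mul continuousAt_const
        have h3 : Tendsto (fun ε : ℝ => ((1-ε)*t) ^ p * W) (𝓝[>] (0:ℝ)) (𝓝 (t ^ p * W)) := by
          have := h1.tendsto.mono_left (nhdsWithin_le_nhds (s := Set.Ioi (0:ℝ)))
          simpa using this
        exact h3
      refine le_of_tendsto hcont ?_
      filter_upwards [Ioo_mem_nhdsGT_of_mem (by simp : (0:ℝ) ∈ Set.Ico (0:ℝ) 1)] with ε hε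
      exact (key ε hε).2
    exact tendsto_of_le_liminf_of_limsup_le hliminf hlimsup

theorem slice_bound (hN : 0 < N) {p : ℝ} (hp : 1 ≤ p) {M : ℝ} (hM0 : 0 ≤ M)
    (ν : Measure (EuclideanSpace ℝ (Fin N)))
    (hν : ∀ s : Set (EuclideanSpace ℝ (Fin N)), ν s ≤ ENNReal.ofReal M * volume s)
    (g : EuclideanSpace ℝ (Fin N) → ℝ) (x : EuclideanSpace ℝ (Fin N)) {lam : ℝ}
    (hlam : 0 < lam) {S : Set (EuclideanSpace ℝ (Fin N))}
    (hS : ∀ y ∈ S, lam * dist x y ^ ((N : ℝ) / p) ≤ |g x - g y| ∧ |g x - g y| ≤ 2 * |g x|) :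
    ENNReal.ofReal (lam ^ p) * ν S ≤
      ENNReal.ofReal ((2 * |g x|) ^ p * M) * volume (ball (0 : EuclideanSpace ℝ (Fin N)) 1) := by
  haveI : Nonempty (Fin N) := ⟨⟨0, hN⟩⟩
  have hp0 : (0:ℝ) < p := lt_of_lt_of_le one_pos hp
  rcases eq_or_lt_of_le (abs_nonneg (g x)) with h0 | h0
  · -- g x = 0 : S ⊆ {x}
    have hsub : S ⊆ {x} := by
      intro y hy
      obtain ⟨h1, h2⟩ := hS y hy
      have h3 : lam * dist x y ^ ((N : ℝ) / p) ≤ 0 := by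
        refine h1.trans (h2.trans ?_)
        rw [← h0]; simp
      have h4 : dist x y ^ ((N : ℝ) / p) ≤ 0 := by
        nlinarith [Real.rpow_nonneg (dist_nonneg (x := x) (y := y)) ((N:ℝ)/p)]
      have h5 : dist x y ^ ((N : ℝ) / p) = 0 :=
        le_antisymm h4 (Real.rpow_nonneg dist_nonneg _)
      have h6 : dist x y = 0 := by
        by_contra h
        have hd : 0 < dist x y := lt_of_le_of_ne dist_nonneg (Ne.symm h)
        exact absurd h5 (ne_of_gt (Real.rpow_pos_of_pos hd _))
      simp [Set.mem_singleton_iff, (dist_eq_zero.1 h6).symm]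
    calc ENNReal.ofReal (lam ^ p) * ν S ≤ ENNReal.ofReal (lam ^ p) * ν {x} :=
          mul_le_mul_right (measure_mono hsub) _
      _ ≤ ENNReal.ofReal (lam ^ p) * (ENNReal.ofReal M * volume {x}) :=
          mul_le_mul_right (hν _) _
      _ = 0 := by rw [measure_singleton]; simp
      _ ≤ _ := zero_le
  · -- g x ≠ 0
    set c := 2 * |g x| with hc
    have hc0 : 0 < c := by positivity
    set R := (c / lam) ^ (p / (N:ℝ)) with hR
    have hR0 : 0 ≤ R := Real.rpow_nonneg (by positivity) _
    have hsub : S ⊆ closedBall x R := by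
      intro y hy
      obtain ⟨h1, h2⟩ := hS y hy
      rw [mem_closedBall, dist_comm]
      exact (rpow_cond hN hp hlam dist_nonneg hc0).1 (h1.trans h2)
    have hvol : volume (closedBall x R) =
        ENNReal.ofReal (R ^ N) * volume (ball (0 : EuclideanSpace ℝ (Fin N)) 1) := by
      rw [Measure.addHaar_closedBall _ _ hR0, finrank_euclideanSpace_fin]
    have hRN : lam ^ p * R ^ N = c ^ p := by
      have h1 : (R:ℝ) ^ N = (c / lam) ^ p := by
        rw [hR, ← Real.rpow_natCast ((c/lam) ^ (p / (N:ℝ))) N, ← Real.rpow_mul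
          (by positivity)]
        congr 1
        have hN0 : ((N:ℝ)) ≠ 0 := Nat.cast_ne_zero.2 hN.ne'
        field_simp
      rw [h1, Real.div_rpow hc0.le hlam.le]
      have : lam ^ p ≠ 0 := by positivity
      field_simp
    calc ENNReal.ofReal (lam ^ p) * ν S
        ≤ ENNReal.ofReal (lam ^ p) * (ENNReal.ofReal M * volume (closedBall x R)) :=
          mul_le_mul_right ((measure_mono hsub).trans (hν _)) _
      _ = ENNReal.ofReal (lam ^ p * (M * R ^ N)) *
            volume (ball (0 : EuclideanSpace ℝ (Fin N)) 1) := by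
          rw [hvol, ENNReal.ofReal_mul (by positivity), ENNReal.ofReal_mul hM0]
          ring
      _ = _ := by rw [show lam ^ p * (M * R ^ N) = c ^ p * M by rw [← hRN]; ring]

theorem slice_limit_eq (hN : 0 < N) {p : ℝ} (hp : 1 ≤ p)
    (ν : Measure (EuclideanSpace ℝ (Fin N))) (g : EuclideanSpace ℝ (Fin N) → ℝ)
    (hsing : ∀ x : EuclideanSpace ℝ (Fin N), ν {x} = 0)
    (hK : ∀ s : ℝ, 0 < s → ν {y | s ≤ |g y|} ≠ ⊤)
    (x : EuclideanSpace ℝ (Fin N)) :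
    Tendsto (fun lam : ℝ => ENNReal.ofReal (lam ^ p) *
        ν {y | |g y| = |g x| ∧ lam * dist x y ^ ((N : ℝ) / p) ≤ |g x - g y|})
      (𝓝[>] (0:ℝ)) (𝓝 0) := by
  have hp0 : (0:ℝ) < p := lt_of_lt_of_le one_pos hp
  rcases eq_or_lt_of_le (abs_nonneg (g x)) with h0 | h0
  · -- |g x| = 0 : slice is contained in {x} for lam > 0
    have hnull : ∀ lam : ℝ, 0 < lam →
        ν {y | |g y| = |g x| ∧ lam * dist x y ^ ((N : ℝ) / p) ≤ |g x - g y|} = 0 := by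
      intro lam hlam
      refine measure_mono_null ?_ (hsing x)
      intro y hy
      obtain ⟨hy1, hy2⟩ := hy
      have hgy : |g y| = 0 := by rw [hy1, ← h0]
      have habs : |g x - g y| = 0 := by
        have h1 : g x = 0 := abs_eq_zero.1 h0.symm
        have h2 : g y = 0 := abs_eq_zero.1 hgy
        simp [h1, h2]
      rw [habs] at hy2
      have h4 : dist x y ^ ((N : ℝ) / p) ≤ 0 := by nlinarith
      have h5 : dist x y ^ ((N : ℝ) / p) = 0 :=
        le_antisymm h4 (Real.rpow_nonneg dist_nonneg _)
      have h6 : dist x y = 0 := by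
        by_contra h
        have hd : 0 < dist x y := lt_of_le_of_ne dist_nonneg (Ne.symm h)
        exact absurd h5 (ne_of_gt (Real.rpow_pos_of_pos hd _))
      simp [Set.mem_singleton_iff, (dist_eq_zero.1 h6).symm]
    refine Tendsto.congr' ?_ tendsto_const_nhds
    filter_upwards [self_mem_nhdsWithin] with lam (hlam : 0 < lam)
    rw [hnull lam hlam, mul_zero]
  · -- |g x| > 0
    set t := |g x|
    have hKfin : ν {y | t ≤ |g y|} ≠ ⊤ := hK t h0
    have hub : ∀ lam : ℝ, ENNReal.ofReal (lam ^ p) *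
        ν {y | |g y| = |g x| ∧ lam * dist x y ^ ((N : ℝ) / p) ≤ |g x - g y|} ≤
        ENNReal.ofReal (lam ^ p) * ν {y | t ≤ |g y|} := by
      intro lam
      refine mul_le_mul_right (measure_mono fun y hy => ?_) _
      exact le_of_eq hy.1.symm
    have hψ0 : Tendsto (fun lam : ℝ => ENNReal.ofReal (lam ^ p) * ν {y | t ≤ |g y|})
        (𝓝[>] (0:ℝ)) (𝓝 0) := by
      have h1 : Tendsto (fun lam : ℝ => ENNReal.ofReal (lam ^ p)) (𝓝[>] (0:ℝ)) (𝓝 0) := by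
        rw [show (0:ℝ≥0∞) = ENNReal.ofReal (0 ^ p) by simp [Real.zero_rpow hp0.ne']]
        refine (ENNReal.continuous_ofReal.tendsto _).comp ?_
        have hc : ContinuousAt (fun z : ℝ => z ^ p) 0 :=
          Real.continuousAt_rpow_const 0 p (Or.inr hp0.le)
        exact hc.tendsto.mono_left nhdsWithin_le_nhds
      simpa using ENNReal.Tendsto.mul_const h1 (Or.inr hKfin)
    refine tendsto_of_tendsto_of_tendsto_of_le_of_le tendsto_const_nhds hψ0
      (fun lam => zero_le) hub

theorem integral_limit (hN : 0 < N) {p : ℝ} (hp : 1 ≤ p) {M : ℝ} (hM0 : 0 ≤ M)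
    (w : EuclideanSpace ℝ (Fin N) → ℝ)
    (hν : ∀ s : Set (EuclideanSpace ℝ (Fin N)),
      (volume.withDensity fun x => ENNReal.ofReal (w x)) s ≤ ENNReal.ofReal M * volume s)
    (g : EuclideanSpace ℝ (Fin N) → ℝ) (hg : Measurable g)
    (hI : ∫⁻ x, ENNReal.ofReal (|g x| ^ p)
      ∂(volume.withDensity fun x => ENNReal.ofReal (w x)) ≠ ⊤)
    (P : ℝ → ℝ → Prop) (hPmeas : MeasurableSet {q : ℝ × ℝ | P q.1 q.2})
    (hPle : ∀ a b : ℝ, P a b → |a - b| ≤ 2 * |a|)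
    (f : EuclideanSpace ℝ (Fin N) → ℝ≥0∞)
    (hptw : ∀ x : EuclideanSpace ℝ (Fin N),
      Tendsto (fun lam : ℝ => ENNReal.ofReal (lam ^ p) *
          (volume.withDensity fun x => ENNReal.ofReal (w x))
            {y | P (g x) (g y) ∧ lam * dist x y ^ ((N : ℝ) / p) ≤ |g x - g y|})
        (𝓝[>] (0:ℝ)) (𝓝 (f x))) :
    Tendsto (fun lam : ℝ => ENNReal.ofReal (lam ^ p) *
        ((volume.withDensity fun x => ENNReal.ofReal (w x)).prod
          (volume.withDensity fun x => ENNReal.ofReal (w x)))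
          {q : EuclideanSpace ℝ (Fin N) × EuclideanSpace ℝ (Fin N) |
            P (g q.1) (g q.2) ∧ lam * dist q.1 q.2 ^ ((N : ℝ) / p) ≤ |g q.1 - g q.2|})
      (𝓝[>] (0:ℝ))
      (𝓝 (∫⁻ x, f x ∂(volume.withDensity fun x => ENNReal.ofReal (w x)))) := by
  haveI : Nonempty (Fin N) := ⟨⟨0, hN⟩⟩
  have hp0 : (0:ℝ) < p := lt_of_lt_of_le one_pos hp
  set ν := volume.withDensity fun x => ENNReal.ofReal (w x) with hνdef
  have hNp : (0:ℝ) ≤ (N:ℝ)/p := by positivity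
  have hSmeas : ∀ lam : ℝ, MeasurableSet
      {q : EuclideanSpace ℝ (Fin N) × EuclideanSpace ℝ (Fin N) |
        P (g q.1) (g q.2) ∧ lam * dist q.1 q.2 ^ ((N : ℝ) / p) ≤ |g q.1 - g q.2|} := by
    intro lam
    refine MeasurableSet.inter ?_ ?_
    · exact ((hg.comp measurable_fst).prodMk (hg.comp measurable_snd)) hPmeas
    · exact measurableSet_le
        (measurable_const.mul
          (((Real.continuous_rpow_const hNp).comp continuous_dist).measurable))
        ((hg.comp measurable_fst).sub (hg.comp measurable_snd)).abs
  have heq : ∀ lam : ℝ, ENNReal.ofReal (lam ^ p) * (ν.prod ν)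
      {q : EuclideanSpace ℝ (Fin N) × EuclideanSpace ℝ (Fin N) |
        P (g q.1) (g q.2) ∧ lam * dist q.1 q.2 ^ ((N : ℝ) / p) ≤ |g q.1 - g q.2|}
      = ∫⁻ x, ENNReal.ofReal (lam ^ p) *
          ν {y | P (g x) (g y) ∧ lam * dist x y ^ ((N : ℝ) / p) ≤ |g x - g y|} ∂ν := by
    intro lam
    rw [Measure.prod_apply (hSmeas lam), ← lintegral_const_mul' _ _ ENNReal.ofReal_ne_top]
    rfl
  have hmain : Tendsto (fun lam : ℝ => ∫⁻ x, ENNReal.ofReal (lam ^ p) *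
      ν {y | P (g x) (g y) ∧ lam * dist x y ^ ((N : ℝ) / p) ≤ |g x - g y|} ∂ν)
      (𝓝[>] (0:ℝ)) (𝓝 (∫⁻ x, f x ∂ν)) := by
    refine tendsto_lintegral_filter_of_dominated_convergence
      (fun x => ENNReal.ofReal ((2 * |g x|) ^ p * M) *
        volume (ball (0 : EuclideanSpace ℝ (Fin N)) 1)) ?_ ?_ ?_ ?_
    · refine Filter.Eventually.of_forall fun lam => ?_
      refine Measurable.const_mul ?_ _
      exact measurable_measure_prodMk_left (hSmeas lam)
    · filter_upwards [self_mem_nhdsWithin] with lam (hlam : 0 < lam)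
      refine Filter.Eventually.of_forall fun x => ?_
      refine slice_bound hN hp hM0 ν hν g x hlam fun y hy => ⟨hy.2, hPle _ _ hy.1⟩
    · -- finiteness of the bound integral
      have hcalc : ∀ x : EuclideanSpace ℝ (Fin N),
          ENNReal.ofReal ((2 * |g x|) ^ p * M) *
            volume (ball (0 : EuclideanSpace ℝ (Fin N)) 1)
          = (volume (ball (0 : EuclideanSpace ℝ (Fin N)) 1) * ENNReal.ofReal (2 ^ p * M)) *
              ENNReal.ofReal (|g x| ^ p) := by
        intro x
        rw [Real.mul_rpow (by norm_num) (abs_nonneg _),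
          show (2:ℝ) ^ p * |g x| ^ p * M = (2 ^ p * M) * |g x| ^ p by ring,
          ENNReal.ofReal_mul (by positivity)]
        ring
      simp only [hcalc]
      rw [lintegral_const_mul' _ _ (by
        exact ENNReal.mul_ne_top measure_ball_lt_top.ne ENNReal.ofReal_ne_top)]
      exact ENNReal.mul_ne_top
        (ENNReal.mul_ne_top measure_ball_lt_top.ne ENNReal.ofReal_ne_top) hI
    · exact Filter.Eventually.of_forall hptw
  exact hmain.congr' (Filter.Eventually.of_forall fun lam => (heq lam).symm) |>.congr'
    (Filter.Eventually.of_forall fun lam => rfl)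

theorem I_ne_top {α : Type*} [MeasurableSpace α] (ν : Measure α) (u : α → ℝ) {p : ℝ}
    (hp : 1 ≤ p) (hu : MemLp u (ENNReal.ofReal p) ν) :
    ∫⁻ x, ENNReal.ofReal (|u x| ^ p) ∂ν ≠ ⊤ := by
  have hp0 : (0:ℝ) < p := lt_of_lt_of_le one_pos hp
  have hq0 : ENNReal.ofReal p ≠ 0 := by simp [ENNReal.ofReal_eq_zero]; linarith
  have hqt : ENNReal.ofReal p ≠ ⊤ := ENNReal.ofReal_ne_top
  have h := hu.2
  rw [eLpNorm_eq_lintegral_rpow_enorm_toReal hq0 hqt] at h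
  rw [ENNReal.toReal_ofReal hp0.le] at h
  have h2 : (∫⁻ x, ‖u x‖ₑ ^ p ∂ν) < ⊤ := by
    by_contra htop
    push_neg at htop
    rw [top_le_iff.1 htop, ENNReal.top_rpow_of_pos (by positivity)] at h
    exact absurd h (lt_irrefl _)
  refine ne_of_lt (lt_of_le_of_lt (le_of_eq ?_) h2)
  refine lintegral_congr fun x => ?_
  rw [← ENNReal.ofReal_rpow_of_nonneg (abs_nonneg _) hp0.le]
  congr 1
  rw [← Real.norm_eq_abs, ofReal_norm_eq_enorm]

theorem swap_eq {N : ℕ} (ν : Measure (EuclideanSpace ℝ (Fin N))) [SFinite ν]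
    {S T : Set (EuclideanSpace ℝ (Fin N) × EuclideanSpace ℝ (Fin N))}
    (hS : MeasurableSet S) (hT : T = Prod.swap ⁻¹' S) :
    (ν.prod ν) T = (ν.prod ν) S := by
  rw [hT, ← Measure.map_apply measurable_swap hS, Measure.prod_swap]

end Auxiliary

theorem weighted_euclidean_weight_with_limit
    (N : ℕ) (hN : 0 < N)
    (w : EuclideanSpace ℝ (Fin N) → ℝ) (hw : Measurable w)
    (hwnn : ∀ᵐ x ∂(volume : Measure (EuclideanSpace ℝ (Fin N))), 0 ≤ w x)
    (hwbdd : MemLp w ⊤ (volume : Measure (EuclideanSpace ℝ (Fin N))))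
    (winf : ℝ) (hwinf : 0 < winf)
    (hlim : Tendsto (fun R : ℝ =>
        (∫ x in ball (0 : EuclideanSpace ℝ (Fin N)) R, w x) /
          (volume (ball (0 : EuclideanSpace ℝ (Fin N)) R)).toReal)
      atTop (𝓝 winf))
    (p : ℝ) (hp : 1 ≤ p)
    (u : EuclideanSpace ℝ (Fin N) → ℝ)
    (hu : MemLp u (ENNReal.ofReal p)
      (volume.withDensity fun x => ENNReal.ofReal (w x))) :
    (∀ x₀ : EuclideanSpace ℝ (Fin N),
      Tendsto (fun r : ℝ =>
          ((volume.withDensity fun x => ENNReal.ofReal (w x)) (ball x₀ r)).toReal /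
            r ^ (N : ℝ))
        atTop
        (𝓝 (winf * (volume (ball (0 : EuclideanSpace ℝ (Fin N)) 1)).toReal))) ∧
    Tendsto (fun lam : ℝ => ENNReal.ofReal (lam ^ p) *
        ((volume.withDensity fun x => ENNReal.ofReal (w x)).prod
          (volume.withDensity fun x => ENNReal.ofReal (w x)))
          {q : EuclideanSpace ℝ (Fin N) × EuclideanSpace ℝ (Fin N) |
            lam * dist q.1 q.2 ^ ((N : ℝ) / p) ≤ |u q.1 - u q.2|})
      (𝓝[>] 0)
      (𝓝 (ENNReal.ofReal (2 * winf *
            (volume (ball (0 : EuclideanSpace ℝ (Fin N)) 1)).toReal) *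
        ∫⁻ x, ENNReal.ofReal (|u x| ^ p)
          ∂(volume.withDensity fun x => ENNReal.ofReal (w x)))) := by
  haveI : Nonempty (Fin N) := ⟨⟨0, hN⟩⟩
  have hp0 : (0:ℝ) < p := lt_of_lt_of_le one_pos hp
  obtain ⟨M, hM0, hM⟩ := wbound w hwbdd
  have hν : ∀ s : Set (EuclideanSpace ℝ (Fin N)),
      (volume.withDensity fun x => ENNReal.ofReal (w x)) s ≤ ENNReal.ofReal M * volume s :=
    nu_le w hM
  have hωpos : 0 < (volume (ball (0 : EuclideanSpace ℝ (Fin N)) 1)).toReal :=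
    ENNReal.toReal_pos (measure_ball_pos _ _ one_pos).ne' measure_ball_lt_top.ne
  have hW0 : 0 ≤ winf * (volume (ball (0 : EuclideanSpace ℝ (Fin N)) 1)).toReal := by
    positivity
  have hfin : ∀ (x : EuclideanSpace ℝ (Fin N)) (r : ℝ),
      (volume.withDensity fun x => ENNReal.ofReal (w x)) (ball x r) ≠ ⊤ := by
    intro x r
    refine ne_of_lt (lt_of_le_of_lt (hν _) ?_)
    exact ENNReal.mul_lt_top ENNReal.ofReal_lt_top measure_ball_lt_top
  -- Part 1
  have hnu0 : ∀ r : ℝ, 0 < r →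
      ((volume.withDensity fun x => ENNReal.ofReal (w x))
        (ball (0 : EuclideanSpace ℝ (Fin N)) r)).toReal
      = ∫ x in ball (0 : EuclideanSpace ℝ (Fin N)) r, w x := by
    intro r hr
    rw [nu_toReal w hw hwnn hM measurableSet_ball measure_ball_lt_top.ne]
    exact ENNReal.toReal_ofReal (integral_nonneg_of_ae (ae_restrict_of_ae hwnn))
  have hcenter := avr_center hN w hnu0 winf hlim
  have part1 : ∀ x₀ : EuclideanSpace ℝ (Fin N),
      Tendsto (fun r : ℝ =>
        ((volume.withDensity fun x => ENNReal.ofReal (w x)) (ball x₀ r)).toReal /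
          r ^ (N : ℝ)) atTop
        (𝓝 (winf * (volume (ball (0 : EuclideanSpace ℝ (Fin N)) 1)).toReal)) :=
    avr_general _ _ hfin (fun c => avr_shift hN _ _ hcenter c)
  refine ⟨part1, ?_⟩
  -- Part 2
  have hcb : ∀ (x : EuclideanSpace ℝ (Fin N)) (r : ℝ),
      (volume.withDensity fun x => ENNReal.ofReal (w x)) (closedBall x r)
        = (volume.withDensity fun x => ENNReal.ofReal (w x)) (ball x r) :=
    nu_closedBall hN w
  have hAEsm := hu.1
  set ν := volume.withDensity fun x => ENNReal.ofReal (w x) with hνdef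
  set g := hAEsm.mk u with hgdef
  have hgmeas : Measurable g := hAEsm.stronglyMeasurable_mk.measurable
  have hug : u =ᵐ[ν] g := hAEsm.ae_eq_mk
  have hIu : ∫⁻ x, ENNReal.ofReal (|u x| ^ p) ∂ν ≠ ⊤ := I_ne_top ν u hp hu
  have hIgu : ∫⁻ x, ENNReal.ofReal (|g x| ^ p) ∂ν
      = ∫⁻ x, ENNReal.ofReal (|u x| ^ p) ∂ν := by
    refine lintegral_congr_ae ?_
    filter_upwards [hug] with x hx
    rw [hx]
  have hIg : ∫⁻ x, ENNReal.ofReal (|g x| ^ p) ∂ν ≠ ⊤ := by rw [hIgu]; exact hIu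
  have hK : ∀ s : ℝ, 0 < s → ν {y | s ≤ |g y|} ≠ ⊤ := fun s hs =>
    cheby ν g hgmeas hp hIg hs
  have hsing : ∀ x : EuclideanSpace ℝ (Fin N), ν {x} = 0 := by
    intro x
    refine le_antisymm (le_trans (hν _) ?_) zero_le
    rw [measure_singleton]
    simp
  have hscal : ∀ (x : EuclideanSpace ℝ (Fin N)) {c : ℝ}, 0 < c →
      Tendsto (fun lam : ℝ => ENNReal.ofReal (lam ^ p) *
          ν (closedBall x ((c / lam) ^ (p / (N : ℝ)))))
        (𝓝[>] (0:ℝ)) (𝓝 (ENNReal.ofReal (c ^ p *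
          (winf * (volume (ball (0 : EuclideanSpace ℝ (Fin N)) 1)).toReal)))) :=
    fun x _ hc => scaling hN ν _ hfin hcb x (part1 x) hp hc
  have hptwA : ∀ x : EuclideanSpace ℝ (Fin N),
      Tendsto (fun lam : ℝ => ENNReal.ofReal (lam ^ p) *
          ν {y | |g y| < |g x| ∧ lam * dist x y ^ ((N : ℝ) / p) ≤ |g x - g y|})
        (𝓝[>] (0:ℝ)) (𝓝 (ENNReal.ofReal (|g x| ^ p *
          (winf * (volume (ball (0 : EuclideanSpace ℝ (Fin N)) 1)).toReal)))) :=
    fun x => slice_limit hN hp ν g _ hscal hK x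
  have hTA : Tendsto (fun lam : ℝ => ENNReal.ofReal (lam ^ p) *
      (ν.prod ν) {q : EuclideanSpace ℝ (Fin N) × EuclideanSpace ℝ (Fin N) |
        |g q.2| < |g q.1| ∧ lam * dist q.1 q.2 ^ ((N : ℝ) / p) ≤ |g q.1 - g q.2|})
      (𝓝[>] (0:ℝ))
      (𝓝 (∫⁻ x, ENNReal.ofReal (|g x| ^ p *
        (winf * (volume (ball (0 : EuclideanSpace ℝ (Fin N)) 1)).toReal)) ∂ν)) :=
    integral_limit hN hp hM0 w hν g hgmeas hIg (fun a b => |b| < |a|)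
      (measurableSet_lt measurable_snd.abs measurable_fst.abs)
      (fun a b hab => by
        calc |a - b| ≤ |a| + |b| := abs_sub a b
          _ ≤ |a| + |a| := by linarith
          _ = 2 * |a| := by ring)
      (fun x => ENNReal.ofReal (|g x| ^ p *
        (winf * (volume (ball (0 : EuclideanSpace ℝ (Fin N)) 1)).toReal))) hptwA
  have hTC : Tendsto (fun lam : ℝ => ENNReal.ofReal (lam ^ p) *
      (ν.prod ν) {q : EuclideanSpace ℝ (Fin N) × EuclideanSpace ℝ (Fin N) |
        |g q.2| = |g q.1| ∧ lam * dist q.1 q.2 ^ ((N : ℝ) / p) ≤ |g q.1 - g q.2|})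
      (𝓝[>] (0:ℝ)) (𝓝 0) := by
    have h := integral_limit hN hp hM0 w hν g hgmeas hIg (fun a b => |b| = |a|)
      (measurableSet_eq_fun measurable_snd.abs measurable_fst.abs)
      (fun a b hab => by
        calc |a - b| ≤ |a| + |b| := abs_sub a b
          _ = 2 * |a| := by rw [hab]; ring)
      (fun _ => (0:ℝ≥0∞)) (fun x => slice_limit_eq hN hp ν g hsing hK x)
    rwa [lintegral_zero] at h
  -- measurability of slices
  have hNp : (0:ℝ) ≤ (N:ℝ)/p := by positivity
  have hcondm : ∀ lam : ℝ, MeasurableSet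
      {q : EuclideanSpace ℝ (Fin N) × EuclideanSpace ℝ (Fin N) |
        lam * dist q.1 q.2 ^ ((N : ℝ) / p) ≤ |g q.1 - g q.2|} := fun lam =>
    measurableSet_le
      (measurable_const.mul
        (((Real.continuous_rpow_const hNp).comp continuous_dist).measurable))
      ((hgmeas.comp measurable_fst).sub (hgmeas.comp measurable_snd)).abs
  have hmlt : ∀ lam : ℝ, MeasurableSet
      {q : EuclideanSpace ℝ (Fin N) × EuclideanSpace ℝ (Fin N) |
        |g q.2| < |g q.1| ∧ lam * dist q.1 q.2 ^ ((N : ℝ) / p) ≤ |g q.1 - g q.2|} := fun lam =>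
    (measurableSet_lt ((hgmeas.comp measurable_snd).abs)
      ((hgmeas.comp measurable_fst).abs)).inter (hcondm lam)
  have hmgt : ∀ lam : ℝ, MeasurableSet
      {q : EuclideanSpace ℝ (Fin N) × EuclideanSpace ℝ (Fin N) |
        |g q.1| < |g q.2| ∧ lam * dist q.1 q.2 ^ ((N : ℝ) / p) ≤ |g q.1 - g q.2|} := fun lam =>
    (measurableSet_lt ((hgmeas.comp measurable_fst).abs)
      ((hgmeas.comp measurable_snd).abs)).inter (hcondm lam)
  have hmeq : ∀ lam : ℝ, MeasurableSet
      {q : EuclideanSpace ℝ (Fin N) × EuclideanSpace ℝ (Fin N) |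
        |g q.2| = |g q.1| ∧ lam * dist q.1 q.2 ^ ((N : ℝ) / p) ≤ |g q.1 - g q.2|} := fun lam =>
    (measurableSet_eq_fun ((hgmeas.comp measurable_snd).abs)
      ((hgmeas.comp measurable_fst).abs)).inter (hcondm lam)
  -- swap symmetry
  have hswap : ∀ lam : ℝ, (ν.prod ν)
      {q : EuclideanSpace ℝ (Fin N) × EuclideanSpace ℝ (Fin N) |
        |g q.1| < |g q.2| ∧ lam * dist q.1 q.2 ^ ((N : ℝ) / p) ≤ |g q.1 - g q.2|}
      = (ν.prod ν)
      {q : EuclideanSpace ℝ (Fin N) × EuclideanSpace ℝ (Fin N) |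
        |g q.2| < |g q.1| ∧ lam * dist q.1 q.2 ^ ((N : ℝ) / p) ≤ |g q.1 - g q.2|} := by
    intro lam
    refine swap_eq ν (hmlt lam) ?_
    ext q
    simp only [Set.mem_preimage, Prod.fst_swap, Prod.snd_swap, Set.mem_setOf_eq]
    rw [dist_comm, abs_sub_comm (g q.2) (g q.1)]
  -- decomposition
  have hdecomp : ∀ lam : ℝ, (ν.prod ν)
      {q : EuclideanSpace ℝ (Fin N) × EuclideanSpace ℝ (Fin N) |
        lam * dist q.1 q.2 ^ ((N : ℝ) / p) ≤ |g q.1 - g q.2|}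
      = (ν.prod ν) {q : EuclideanSpace ℝ (Fin N) × EuclideanSpace ℝ (Fin N) |
          |g q.2| < |g q.1| ∧ lam * dist q.1 q.2 ^ ((N : ℝ) / p) ≤ |g q.1 - g q.2|}
        + ((ν.prod ν) {q : EuclideanSpace ℝ (Fin N) × EuclideanSpace ℝ (Fin N) |
          |g q.1| < |g q.2| ∧ lam * dist q.1 q.2 ^ ((N : ℝ) / p) ≤ |g q.1 - g q.2|}
        + (ν.prod ν) {q : EuclideanSpace ℝ (Fin N) × EuclideanSpace ℝ (Fin N) |
          |g q.2| = |g q.1| ∧ lam * dist q.1 q.2 ^ ((N : ℝ) / p) ≤ |g q.1 - g q.2|}) := by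
    intro lam
    have hunion : {q : EuclideanSpace ℝ (Fin N) × EuclideanSpace ℝ (Fin N) |
        lam * dist q.1 q.2 ^ ((N : ℝ) / p) ≤ |g q.1 - g q.2|}
        = {q : EuclideanSpace ℝ (Fin N) × EuclideanSpace ℝ (Fin N) |
            |g q.2| < |g q.1| ∧ lam * dist q.1 q.2 ^ ((N : ℝ) / p) ≤ |g q.1 - g q.2|}
          ∪ ({q : EuclideanSpace ℝ (Fin N) × EuclideanSpace ℝ (Fin N) |
            |g q.1| < |g q.2| ∧ lam * dist q.1 q.2 ^ ((N : ℝ) / p) ≤ |g q.1 - g q.2|}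
          ∪ {q : EuclideanSpace ℝ (Fin N) × EuclideanSpace ℝ (Fin N) |
            |g q.2| = |g q.1| ∧ lam * dist q.1 q.2 ^ ((N : ℝ) / p) ≤ |g q.1 - g q.2|}) := by
      ext q
      simp only [Set.mem_union, Set.mem_setOf_eq]
      constructor
      · intro h
        rcases lt_trichotomy (|g q.2|) (|g q.1|) with hc | hc | hc
        · exact Or.inl ⟨hc, h⟩
        · exact Or.inr (Or.inr ⟨hc, h⟩)
        · exact Or.inr (Or.inl ⟨hc, h⟩)
      · rintro (⟨_, h⟩ | ⟨_, h⟩ | ⟨_, h⟩) <;> exact h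
    have hd1 : Disjoint
        {q : EuclideanSpace ℝ (Fin N) × EuclideanSpace ℝ (Fin N) |
          |g q.2| < |g q.1| ∧ lam * dist q.1 q.2 ^ ((N : ℝ) / p) ≤ |g q.1 - g q.2|}
        ({q : EuclideanSpace ℝ (Fin N) × EuclideanSpace ℝ (Fin N) |
          |g q.1| < |g q.2| ∧ lam * dist q.1 q.2 ^ ((N : ℝ) / p) ≤ |g q.1 - g q.2|}
        ∪ {q : EuclideanSpace ℝ (Fin N) × EuclideanSpace ℝ (Fin N) |
          |g q.2| = |g q.1| ∧ lam * dist q.1 q.2 ^ ((N : ℝ) / p) ≤ |g q.1 - g q.2|}) := by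
      rw [Set.disjoint_left]
      rintro q ⟨h1, _⟩ (⟨h2, _⟩ | ⟨h2, _⟩)
      · exact absurd h2 (not_lt.2 h1.le)
      · exact absurd h2 (ne_of_lt h1)
    have hd2 : Disjoint
        {q : EuclideanSpace ℝ (Fin N) × EuclideanSpace ℝ (Fin N) |
          |g q.1| < |g q.2| ∧ lam * dist q.1 q.2 ^ ((N : ℝ) / p) ≤ |g q.1 - g q.2|}
        {q : EuclideanSpace ℝ (Fin N) × EuclideanSpace ℝ (Fin N) |
          |g q.2| = |g q.1| ∧ lam * dist q.1 q.2 ^ ((N : ℝ) / p) ≤ |g q.1 - g q.2|} := by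
      rw [Set.disjoint_left]
      rintro q ⟨h1, _⟩ ⟨h2, _⟩
      exact absurd h2 (ne_of_gt h1)
    rw [hunion, measure_union hd1 ((hmgt lam).union (hmeq lam)), measure_union hd2 (hmeq lam)]
  -- replace u by g
  have hcongru : ∀ lam : ℝ, (ν.prod ν)
      {q : EuclideanSpace ℝ (Fin N) × EuclideanSpace ℝ (Fin N) |
        lam * dist q.1 q.2 ^ ((N : ℝ) / p) ≤ |u q.1 - u q.2|}
      = (ν.prod ν) {q : EuclideanSpace ℝ (Fin N) × EuclideanSpace ℝ (Fin N) |
        lam * dist q.1 q.2 ^ ((N : ℝ) / p) ≤ |g q.1 - g q.2|} := by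
    obtain ⟨Z, hZsub, hZm, hZ0⟩ := exists_measurable_superset_of_null (ae_iff.1 hug)
    have hB0 : (ν.prod ν) ((Z ×ˢ (Set.univ : Set (EuclideanSpace ℝ (Fin N))))
        ∪ ((Set.univ : Set (EuclideanSpace ℝ (Fin N))) ×ˢ Z)) = 0 := by
      refine le_antisymm (le_trans (measure_union_le _ _) ?_) zero_le
      rw [Measure.prod_prod, Measure.prod_prod, hZ0]
      simp
    have hae : ∀ᵐ q ∂(ν.prod ν), u q.1 = g q.1 ∧ u q.2 = g q.2 := by
      have h1 : ∀ᵐ q ∂(ν.prod ν), q ∉ ((Z ×ˢ (Set.univ : Set (EuclideanSpace ℝ (Fin N))))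
          ∪ ((Set.univ : Set (EuclideanSpace ℝ (Fin N))) ×ˢ Z)) := by
        rw [ae_iff]
        have hset : {q : EuclideanSpace ℝ (Fin N) × EuclideanSpace ℝ (Fin N) |
            ¬ q ∉ ((Z ×ˢ (Set.univ : Set (EuclideanSpace ℝ (Fin N))))
              ∪ ((Set.univ : Set (EuclideanSpace ℝ (Fin N))) ×ˢ Z))}
            = ((Z ×ˢ (Set.univ : Set (EuclideanSpace ℝ (Fin N))))
              ∪ ((Set.univ : Set (EuclideanSpace ℝ (Fin N))) ×ˢ Z)) := by
          ext q
          simp only [Set.mem_setOf_eq, not_not]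
        rw [hset]
        exact hB0
      filter_upwards [h1] with q hq
      simp only [Set.mem_union, Set.mem_prod, Set.mem_univ, and_true, true_and,
        not_or] at hq
      obtain ⟨h1', h2'⟩ := hq
      constructor
      · by_contra hne
        exact h1' (hZsub hne)
      · by_contra hne
        exact h2' (hZsub hne)
    intro lam
    refine measure_congr (Filter.eventuallyEq_set.2 ?_)
    filter_upwards [hae] with q hq
    obtain ⟨h1, h2⟩ := hq
    show (lam * dist q.1 q.2 ^ ((N : ℝ) / p) ≤ |u q.1 - u q.2|) ↔
      (lam * dist q.1 q.2 ^ ((N : ℝ) / p) ≤ |g q.1 - g q.2|)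
    rw [h1, h2]
  -- combine
  have hfun : ∀ lam : ℝ, ENNReal.ofReal (lam ^ p) * (ν.prod ν)
      {q : EuclideanSpace ℝ (Fin N) × EuclideanSpace ℝ (Fin N) |
        lam * dist q.1 q.2 ^ ((N : ℝ) / p) ≤ |u q.1 - u q.2|}
      = ENNReal.ofReal (lam ^ p) * (ν.prod ν)
          {q : EuclideanSpace ℝ (Fin N) × EuclideanSpace ℝ (Fin N) |
            |g q.2| < |g q.1| ∧ lam * dist q.1 q.2 ^ ((N : ℝ) / p) ≤ |g q.1 - g q.2|}
        + (ENNReal.ofReal (lam ^ p) * (ν.prod ν)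
          {q : EuclideanSpace ℝ (Fin N) × EuclideanSpace ℝ (Fin N) |
            |g q.2| < |g q.1| ∧ lam * dist q.1 q.2 ^ ((N : ℝ) / p) ≤ |g q.1 - g q.2|}
        + ENNReal.ofReal (lam ^ p) * (ν.prod ν)
          {q : EuclideanSpace ℝ (Fin N) × EuclideanSpace ℝ (Fin N) |
            |g q.2| = |g q.1| ∧ lam * dist q.1 q.2 ^ ((N : ℝ) / p) ≤ |g q.1 - g q.2|}) := by
    intro lam
    rw [hcongru lam, hdecomp lam, hswap lam, mul_add, mul_add]
  have htotal : Tendsto (fun lam : ℝ =>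
      ENNReal.ofReal (lam ^ p) * (ν.prod ν)
        {q : EuclideanSpace ℝ (Fin N) × EuclideanSpace ℝ (Fin N) |
          |g q.2| < |g q.1| ∧ lam * dist q.1 q.2 ^ ((N : ℝ) / p) ≤ |g q.1 - g q.2|}
      + (ENNReal.ofReal (lam ^ p) * (ν.prod ν)
        {q : EuclideanSpace ℝ (Fin N) × EuclideanSpace ℝ (Fin N) |
          |g q.2| < |g q.1| ∧ lam * dist q.1 q.2 ^ ((N : ℝ) / p) ≤ |g q.1 - g q.2|}
      + ENNReal.ofReal (lam ^ p) * (ν.prod ν)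
        {q : EuclideanSpace ℝ (Fin N) × EuclideanSpace ℝ (Fin N) |
          |g q.2| = |g q.1| ∧ lam * dist q.1 q.2 ^ ((N : ℝ) / p) ≤ |g q.1 - g q.2|}))
      (𝓝[>] (0:ℝ))
      (𝓝 ((∫⁻ x, ENNReal.ofReal (|g x| ^ p *
          (winf * (volume (ball (0 : EuclideanSpace ℝ (Fin N)) 1)).toReal)) ∂ν)
        + ((∫⁻ x, ENNReal.ofReal (|g x| ^ p *
          (winf * (volume (ball (0 : EuclideanSpace ℝ (Fin N)) 1)).toReal)) ∂ν) + 0))) :=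
    hTA.add (hTA.add hTC)
  have hLA : ∫⁻ x, ENNReal.ofReal (|g x| ^ p *
      (winf * (volume (ball (0 : EuclideanSpace ℝ (Fin N)) 1)).toReal)) ∂ν
      = (∫⁻ x, ENNReal.ofReal (|u x| ^ p) ∂ν) * ENNReal.ofReal
        (winf * (volume (ball (0 : EuclideanSpace ℝ (Fin N)) 1)).toReal) := by
    calc ∫⁻ x, ENNReal.ofReal (|g x| ^ p *
        (winf * (volume (ball (0 : EuclideanSpace ℝ (Fin N)) 1)).toReal)) ∂ν
        = ∫⁻ x, ENNReal.ofReal (|g x| ^ p) * ENNReal.ofReal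
            (winf * (volume (ball (0 : EuclideanSpace ℝ (Fin N)) 1)).toReal) ∂ν := by
          refine lintegral_congr fun x => ?_
          rw [ENNReal.ofReal_mul (Real.rpow_nonneg (abs_nonneg _) _)]
      _ = (∫⁻ x, ENNReal.ofReal (|g x| ^ p) ∂ν) * ENNReal.ofReal
            (winf * (volume (ball (0 : EuclideanSpace ℝ (Fin N)) 1)).toReal) :=
          lintegral_mul_const' _ _ ENNReal.ofReal_ne_top
      _ = _ := by rw [hIgu]
  have hlimeq : (∫⁻ x, ENNReal.ofReal (|g x| ^ p *
        (winf * (volume (ball (0 : EuclideanSpace ℝ (Fin N)) 1)).toReal)) ∂ν)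
      + ((∫⁻ x, ENNReal.ofReal (|g x| ^ p *
        (winf * (volume (ball (0 : EuclideanSpace ℝ (Fin N)) 1)).toReal)) ∂ν) + 0)
      = ENNReal.ofReal (2 * winf *
          (volume (ball (0 : EuclideanSpace ℝ (Fin N)) 1)).toReal) *
        ∫⁻ x, ENNReal.ofReal (|u x| ^ p) ∂ν := by
    rw [add_zero, hLA]
    rw [show (2:ℝ) * winf * (volume (ball (0 : EuclideanSpace ℝ (Fin N)) 1)).toReal
      = 2 * (winf * (volume (ball (0 : EuclideanSpace ℝ (Fin N)) 1)).toReal) by ring]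
    rw [ENNReal.ofReal_mul (by norm_num : (0:ℝ) ≤ 2), ENNReal.ofReal_ofNat]
    ring
  rw [← hlimeq]
  exact htotal.congr fun lam => (hfun lam).symm
end

section
/- Let (X,d,ν) be upper Ahlfors regular of dimension s (ν(B(x,r)) ≤ C_A r^s) with asymptotic volume ratio AVR ∈ (0,∞). For u ∈ L^p(X,ν) and λ > 0, define f_λ(x) = λ^p ν(B(x, (|u(x)|/λ)^{p/s})). Then 0 ≤ f_λ(x) ≤ C_A |u(x)|^p for all x with u(x) ≠ 0, f_λ(x) → AVR·|u(x)|^p as λ → 0⁺ for ν-a.e. x, and consequently lim_{λ→0⁺} ∫_X f_λ dν = AVR ∫_X |u|^p dν. -/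
open MeasureTheory Metric Filter Topology

theorem f_lambda_dominated_convergence
    {X : Type*} [MetricSpace X] [CompleteSpace X] [SecondCountableTopology X]
    [MeasurableSpace X] [BorelSpace X]
    (ν : Measure X) [SigmaFinite ν]
    (s C_A : ℝ) (hs : 0 < s) (hCA : 0 < C_A)
    (hreg : ∀ (x : X) (r : ℝ), 0 < r → ν (ball x r) ≤ ENNReal.ofReal (C_A * r ^ s))
    (AVR : ℝ) (hAVR : 0 < AVR)
    (hAVRlim : ∀ x : X,
      Tendsto (fun r : ℝ => (ν (ball x r)).toReal / r ^ s) atTop (𝓝 AVR))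
    (p : ℝ) (hp : 1 ≤ p) (u : X → ℝ) (hu : MemLp u (ENNReal.ofReal p) ν) :
    (∀ lam : ℝ, 0 < lam → ∀ x : X, u x ≠ 0 →
      ENNReal.ofReal (lam ^ p) * ν (ball x ((|u x| / lam) ^ (p / s))) ≤
        ENNReal.ofReal (C_A * |u x| ^ p)) ∧
    (∀ᵐ x ∂ν,
      Tendsto (fun lam : ℝ =>
          ENNReal.ofReal (lam ^ p) * ν (ball x ((|u x| / lam) ^ (p / s))))
        (𝓝[>] 0) (𝓝 (ENNReal.ofReal (AVR * |u x| ^ p)))) ∧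
    Tendsto (fun lam : ℝ =>
        ∫⁻ x, ENNReal.ofReal (lam ^ p) * ν (ball x ((|u x| / lam) ^ (p / s))) ∂ν)
      (𝓝[>] 0)
      (𝓝 (ENNReal.ofReal AVR * ∫⁻ x, ENNReal.ofReal (|u x| ^ p) ∂ν)) := by
  have hp0 : (0 : ℝ) < p := lt_of_lt_of_le one_pos hp
  have hps : (0 : ℝ) < p / s := div_pos hp0 hs
  -- key algebraic identity : lam^p * ((t/lam)^(p/s))^s = t^p
  have key : ∀ (lam : ℝ), 0 < lam → ∀ t : ℝ, 0 ≤ t →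
      lam ^ p * ((t / lam) ^ (p / s)) ^ s = t ^ p := by
    intro lam hlam t ht
    have hdiv : (0 : ℝ) ≤ t / lam := div_nonneg ht hlam.le
    rw [← Real.rpow_mul hdiv, div_mul_cancel₀ p hs.ne', ← Real.mul_rpow hlam.le hdiv,
      mul_div_cancel₀ t hlam.ne']
  -- the pointwise bound, for arbitrary value t
  have bound_gen : ∀ lam : ℝ, 0 < lam → ∀ x : X, ∀ t : ℝ,
      ENNReal.ofReal (lam ^ p) * ν (ball x ((|t| / lam) ^ (p / s))) ≤
        ENNReal.ofReal (C_A * |t| ^ p) := by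
    intro lam hlam x t
    rcases eq_or_ne t 0 with rfl | ht
    · simp [Real.zero_rpow hps.ne', Metric.ball_zero]
    · have habs : 0 < |t| := abs_pos.mpr ht
      set r := (|t| / lam) ^ (p / s) with hr
      have hrpos : 0 < r := Real.rpow_pos_of_pos (div_pos habs hlam) _
      calc ENNReal.ofReal (lam ^ p) * ν (ball x r)
          ≤ ENNReal.ofReal (lam ^ p) * ENNReal.ofReal (C_A * r ^ s) :=
            mul_le_mul_right (hreg x r hrpos) _
        _ = ENNReal.ofReal (lam ^ p * (C_A * r ^ s)) :=
            (ENNReal.ofReal_mul (Real.rpow_nonneg hlam.le p)).symm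
        _ = ENNReal.ofReal (C_A * |t| ^ p) := by
            rw [show lam ^ p * (C_A * r ^ s) = C_A * (lam ^ p * r ^ s) by ring,
              key lam hlam _ (abs_nonneg t)]
  -- the pointwise convergence, for arbitrary value t
  have conv_gen : ∀ (x : X) (t : ℝ),
      Tendsto (fun lam : ℝ =>
          ENNReal.ofReal (lam ^ p) * ν (ball x ((|t| / lam) ^ (p / s))))
        (𝓝[>] 0) (𝓝 (ENNReal.ofReal (AVR * |t| ^ p))) := by
    intro x t
    rcases eq_or_ne t 0 with rfl | ht
    · simp [Real.zero_rpow hps.ne', Real.zero_rpow hp0.ne', Metric.ball_zero,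
        tendsto_const_nhds]
    · have habs : 0 < |t| := abs_pos.mpr ht
      -- the radius tends to infinity
      have hdivt : Tendsto (fun lam : ℝ => |t| / lam) (𝓝[>] (0:ℝ)) atTop := by
        simpa [div_eq_mul_inv] using
          (tendsto_inv_nhdsGT_zero (𝕜 := ℝ)).const_mul_atTop habs
      have hrt : Tendsto (fun lam : ℝ => (|t| / lam) ^ (p / s)) (𝓝[>] (0:ℝ)) atTop :=
        (tendsto_rpow_atTop hps).comp hdivt
      have glim : Tendsto (fun lam : ℝ =>
          (ν (ball x ((|t| / lam) ^ (p / s)))).toReal / ((|t| / lam) ^ (p / s)) ^ s)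
          (𝓝[>] (0:ℝ)) (𝓝 AVR) := (hAVRlim x).comp hrt
      have main : Tendsto (fun lam : ℝ =>
          ENNReal.ofReal (|t| ^ p *
            ((ν (ball x ((|t| / lam) ^ (p / s)))).toReal / ((|t| / lam) ^ (p / s)) ^ s)))
          (𝓝[>] (0:ℝ)) (𝓝 (ENNReal.ofReal (AVR * |t| ^ p))) := by
        have := (ENNReal.continuous_ofReal.tendsto _).comp (glim.const_mul (|t| ^ p))
        simpa [mul_comm, Function.comp_def] using this
      refine main.congr' ?_
      filter_upwards [self_mem_nhdsWithin] with lam (hlam : 0 < lam)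
      set r := (|t| / lam) ^ (p / s) with hr
      have hrpos : 0 < r := Real.rpow_pos_of_pos (div_pos habs hlam) _
      have hrs : 0 < r ^ s := Real.rpow_pos_of_pos hrpos s
      have hfin : ν (ball x r) ≠ ⊤ :=
        ((hreg x r hrpos).trans_lt ENNReal.ofReal_lt_top).ne
      have hlamp : lam ^ p = |t| ^ p / r ^ s := by
        rw [eq_div_iff hrs.ne']; exact key lam hlam _ (abs_nonneg t)
      rw [show |t| ^ p * ((ν (ball x r)).toReal / r ^ s)
            = lam ^ p * (ν (ball x r)).toReal by rw [hlamp]; ring,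
        ENNReal.ofReal_mul (Real.rpow_nonneg hlam.le p), ENNReal.ofReal_toReal hfin]
  refine ⟨fun lam hlam x _ => bound_gen lam hlam x (u x),
    Filter.Eventually.of_forall (fun x => conv_gen x (u x)), ?_⟩
  -- a measurable representative of u
  obtain ⟨u', hmeas', huu'⟩ : ∃ u' : X → ℝ, Measurable u' ∧ u =ᵐ[ν] u' :=
    ⟨hu.1.mk u, hu.1.stronglyMeasurable_mk.measurable, hu.1.ae_eq_mk⟩
  -- measurability of x ↦ ν (ball x (g x))
  have hball : ∀ (g : X → ℝ), Measurable g → Measurable fun x => ν (ball x (g x)) := by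
    intro g hg
    have hSet : MeasurableSet {q : X × X | dist q.2 q.1 < g q.1} :=
      measurableSet_lt (measurable_dist.comp (measurable_snd.prodMk measurable_fst))
        (hg.comp measurable_fst)
    exact measurable_measure_prodMk_left (ν := ν) hSet
  -- finiteness of the integral of the dominating function
  have hIu : ∫⁻ x, ENNReal.ofReal (|u x| ^ p) ∂ν ≠ ⊤ := by
    have h1 : (∫⁻ a, ‖u a‖ₑ ^ (ENNReal.ofReal p).toReal ∂ν) < ⊤ :=
      lintegral_rpow_enorm_lt_top_of_eLpNorm_lt_top
        (by simpa [ENNReal.ofReal_eq_zero] using hp0.not_ge) ENNReal.ofReal_ne_top hu.2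
    have h2 : ∀ a : X, ‖u a‖ₑ ^ (ENNReal.ofReal p).toReal
        = ENNReal.ofReal (|u a| ^ p) := by
      intro a
      rw [ENNReal.toReal_ofReal hp0.le, Real.enorm_eq_ofReal_abs,
        ← ENNReal.ofReal_rpow_of_nonneg (abs_nonneg _) hp0.le]
    simp_rw [h2] at h1
    exact h1.ne
  have hIu' : ∫⁻ x, ENNReal.ofReal (|u' x| ^ p) ∂ν = ∫⁻ x, ENNReal.ofReal (|u x| ^ p) ∂ν :=
    lintegral_congr_ae (huu'.mono fun x hx => by simp only [hx])
  -- dominated convergence for u'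
  have main : Tendsto (fun lam : ℝ =>
      ∫⁻ x, ENNReal.ofReal (lam ^ p) * ν (ball x ((|u' x| / lam) ^ (p / s))) ∂ν)
      (𝓝[>] 0)
      (𝓝 (∫⁻ x, ENNReal.ofReal (AVR * |u' x| ^ p) ∂ν)) := by
    refine tendsto_lintegral_filter_of_dominated_convergence
      (fun x => ENNReal.ofReal (C_A * |u' x| ^ p)) ?_ ?_ ?_ ?_
    · refine Eventually.of_forall fun lam => ?_
      have hrad : Measurable fun x => (|u' x| / lam) ^ (p / s) :=
        (Real.continuous_rpow_const hps.le).measurable.comp (hmeas'.abs.div_const lam)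
      exact (hball _ hrad).const_mul _
    · filter_upwards [self_mem_nhdsWithin] with lam (hlam : 0 < lam)
      exact Filter.Eventually.of_forall fun x => bound_gen lam hlam x (u' x)
    · rw [show (fun x => ENNReal.ofReal (C_A * |u' x| ^ p))
          = fun x => ENNReal.ofReal C_A * ENNReal.ofReal (|u' x| ^ p) by
            funext x; rw [ENNReal.ofReal_mul hCA.le],
        lintegral_const_mul' _ _ ENNReal.ofReal_ne_top, hIu']
      exact ENNReal.mul_ne_top ENNReal.ofReal_ne_top hIu
    · exact Filter.Eventually.of_forall fun x => conv_gen x (u' x)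
  -- transfer back to u
  have heq : (fun lam : ℝ =>
      ∫⁻ x, ENNReal.ofReal (lam ^ p) * ν (ball x ((|u' x| / lam) ^ (p / s))) ∂ν)
      = fun lam : ℝ =>
      ∫⁻ x, ENNReal.ofReal (lam ^ p) * ν (ball x ((|u x| / lam) ^ (p / s))) ∂ν := by
    funext lam
    exact lintegral_congr_ae (huu'.mono fun x hx => by simp only [hx])
  have hval : ∫⁻ x, ENNReal.ofReal (AVR * |u' x| ^ p) ∂ν
      = ENNReal.ofReal AVR * ∫⁻ x, ENNReal.ofReal (|u x| ^ p) ∂ν := by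
    rw [show (fun x => ENNReal.ofReal (AVR * |u' x| ^ p))
        = fun x => ENNReal.ofReal AVR * ENNReal.ofReal (|u' x| ^ p) by
          funext x; rw [ENNReal.ofReal_mul hAVR.le],
      lintegral_const_mul' _ _ ENNReal.ofReal_ne_top, hIu']
  rw [← heq, ← hval]
  exact main
end

section
/- There exists a metric measure space (ℝ^N, d_Eucl, w·L^N) with a weight w taking only two values 0 < m < M on concentric annuli, which is Ahlfors regular of dimension N, but for which the asymptotic volume ratio does not exist: limsup_{r→∞} ν(B(0,r))/r^N = Mω_N > mω_N = liminf_{r→∞} ν(B(0,r))/r^N. Moreover, for u = 1_{B(0,1)} and any p ≥ 1, the limit lim_{λ→0⁺} λ^p (ν⊗ν)(E_λ) does not exist: limsup_{λ→0⁺} λ^p (ν⊗ν)(E_λ) ≥ 2Mmω_N² > 2m²ω_N² ≥ liminf_{λ→0⁺} λ^p (ν⊗ν)(E_λ). -/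
open MeasureTheory Metric Filter Topology

namespace NoAVRAux

noncomputable def tt (n : ℕ) : ℝ := 2 ^ (2 ^ n)

lemma tt_zero : tt 0 = 2 := by norm_num [tt]

lemma tt_succ (n : ℕ) : tt (n + 1) = tt n ^ 2 := by
  unfold tt
  rw [← pow_mul, pow_succ]

lemma tt_two (n : ℕ) : 2 ≤ tt n := by
  have h : (2:ℝ) ^ 1 ≤ 2 ^ (2 ^ n) := by
    apply pow_le_pow_right₀ one_le_two Nat.one_le_two_pow
  simpa [tt] using h

lemma tt_pos (n : ℕ) : 0 < tt n := lt_of_lt_of_le two_pos (tt_two n)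

lemma tt_mono : StrictMono tt := by
  apply strictMono_nat_of_lt_succ
  intro n
  rw [tt_succ, sq]
  nlinarith [tt_two n]

lemma tt_ge (n : ℕ) : (n : ℝ) + 2 ≤ tt n := by
  induction n with
  | zero => simp [tt_zero]
  | succ k ih =>
      rw [tt_succ, sq]
      push_cast
      nlinarith [tt_two k]

lemma tt_tendsto : Tendsto tt atTop atTop := by
  apply tendsto_atTop_mono tt_ge
  apply tendsto_atTop_add_const_right
  exact tendsto_natCast_atTop_atTop

/-- limsup of a real function along `atTop` equals `L` if it is eventually bounded above by `L`
and converges to `L` along a subsequence. -/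
lemma real_limsup_eq {f : ℝ → ℝ} {L : ℝ} (x : ℕ → ℝ) (hx : Tendsto x atTop atTop)
    (hfx : Tendsto (fun k => f (x k)) atTop (𝓝 L)) (hub : ∀ᶠ r in atTop, f r ≤ L) :
    limsup f atTop = L := by
  have hb : IsBoundedUnder (· ≤ ·) atTop f := isBoundedUnder_of_eventually_le hub
  refine le_antisymm ?_ ?_
  · refine limsup_le_of_le ?_ hub
    have h1 : ∀ᶠ k in atTop, L - 1 ≤ f (x k) :=
      (hfx.eventually_const_le (by linarith : L - 1 < L))
    exact IsCoboundedUnder.of_frequently_ge (hx.frequently h1.frequently)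
  · by_contra hlt
    push_neg at hlt
    obtain ⟨c, hc1, hc2⟩ := exists_between hlt
    have h1 : ∀ᶠ k in atTop, c ≤ f (x k) := hfx.eventually_const_le hc2
    have := le_limsup_of_frequently_le (hx.frequently h1.frequently) hb
    exact absurd (lt_of_le_of_lt this hc1) (lt_irrefl _)

lemma real_liminf_eq {f : ℝ → ℝ} {L : ℝ} (x : ℕ → ℝ) (hx : Tendsto x atTop atTop)
    (hfx : Tendsto (fun k => f (x k)) atTop (𝓝 L)) (hlb : ∀ᶠ r in atTop, L ≤ f r) :
    liminf f atTop = L := by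
  have hb : IsBoundedUnder (· ≥ ·) atTop f := isBoundedUnder_of_eventually_ge hlb
  refine le_antisymm ?_ ?_
  · by_contra hlt
    push_neg at hlt
    obtain ⟨c, hc1, hc2⟩ := exists_between hlt
    have h1 : ∀ᶠ k in atTop, f (x k) ≤ c := hfx.eventually_le_const hc1
    have := liminf_le_of_frequently_le (hx.frequently h1.frequently) hb
    exact absurd (lt_of_lt_of_le hc2 this) (lt_irrefl _)
  · refine le_liminf_of_le ?_ hlb
    have h1 : ∀ᶠ k in atTop, f (x k) ≤ L + 1 :=
      (hfx.eventually_le_const (by linarith : L < L + 1))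
    exact IsCoboundedUnder.of_frequently_le (hx.frequently h1.frequently)

section WithDensity

variable {α : Type*} [MeasurableSpace α] {μ : Measure α} {w : α → ℝ} {s : Set α} {c : ℝ}

lemma nu_eq_on (hs : MeasurableSet s) (h : ∀ x ∈ s, w x = c) :
    μ.withDensity (fun x => ENNReal.ofReal (w x)) s = ENNReal.ofReal c * μ s := by
  rw [withDensity_apply _ hs,
    setLIntegral_congr_fun hs (fun x hx => by rw [h x hx]), setLIntegral_const]

lemma nu_le_on (hs : MeasurableSet s) (h : ∀ x ∈ s, w x ≤ c) :
    μ.withDensity (fun x => ENNReal.ofReal (w x)) s ≤ ENNReal.ofReal c * μ s := by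
  rw [withDensity_apply _ hs, ← setLIntegral_const]
  exact setLIntegral_mono' hs fun x hx => ENNReal.ofReal_le_ofReal (h x hx)

lemma nu_ge_on (hs : MeasurableSet s) (h : ∀ x ∈ s, c ≤ w x) :
    ENNReal.ofReal c * μ s ≤ μ.withDensity (fun x => ENNReal.ofReal (w x)) s := by
  rw [withDensity_apply _ hs, ← setLIntegral_const]
  exact setLIntegral_mono' hs fun x hx => ENNReal.ofReal_le_ofReal (h x hx)

end WithDensity

/- The two-valued weight: `M` on even annuli, `m` elsewhere. -/
open Classical in
noncomputable def wfun (N : ℕ) (m M : ℝ) : EuclideanSpace ℝ (Fin N) → ℝ :=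
  fun x => if ∃ k, tt (2*k) ≤ ‖x‖ ∧ ‖x‖ < tt (2*k+1) then M else m

lemma wfun_measurable (N : ℕ) (m M : ℝ) : Measurable (wfun N m M) := by
  have hset : {x : EuclideanSpace ℝ (Fin N) | ∃ k, tt (2*k) ≤ ‖x‖ ∧ ‖x‖ < tt (2*k+1)}
      = ⋃ k, (fun x : EuclideanSpace ℝ (Fin N) => ‖x‖) ⁻¹' Set.Ico (tt (2*k)) (tt (2*k+1)) := by
    ext x; simp [Set.mem_Ico]
  unfold wfun
  apply Measurable.ite ?_ measurable_const measurable_const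
  rw [hset]
  exact MeasurableSet.iUnion fun k => measurable_norm measurableSet_Ico

lemma wfun_two_valued (N : ℕ) (m M : ℝ) (x : EuclideanSpace ℝ (Fin N)) :
    wfun N m M x = m ∨ wfun N m M x = M := by
  unfold wfun
  split
  · exact Or.inr rfl
  · exact Or.inl rfl

lemma wfun_M (N : ℕ) (m M : ℝ) (x : EuclideanSpace ℝ (Fin N)) (k : ℕ)
    (h1 : tt (2*k) ≤ ‖x‖) (h2 : ‖x‖ < tt (2*k+1)) : wfun N m M x = M := by
  unfold wfun
  exact if_pos ⟨k, h1, h2⟩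

lemma wfun_low (N : ℕ) (m M : ℝ) (x : EuclideanSpace ℝ (Fin N)) (h : ‖x‖ < 2) :
    wfun N m M x = m := by
  unfold wfun
  apply if_neg
  rintro ⟨k, hk1, hk2⟩
  linarith [tt_two (2*k)]

lemma wfun_odd (N : ℕ) (m M : ℝ) (x : EuclideanSpace ℝ (Fin N)) (k : ℕ)
    (h1 : tt (2*k+1) ≤ ‖x‖) (h2 : ‖x‖ < tt (2*k+2)) : wfun N m M x = m := by
  unfold wfun
  apply if_neg
  rintro ⟨j, hj1, hj2⟩
  rcases le_or_gt j k with h | h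
  · have : tt (2*j+1) ≤ tt (2*k+1) := (tt_mono.monotone (by omega))
    linarith
  · have : tt (2*k+2) ≤ tt (2*j) := (tt_mono.monotone (by omega))
    linarith

lemma wfun_le (N : ℕ) {m M : ℝ} (h : m ≤ M) (x : EuclideanSpace ℝ (Fin N)) :
    wfun N m M x ≤ M := by
  rcases wfun_two_valued N m M x with h' | h' <;> rw [h']
  exact h

lemma wfun_ge (N : ℕ) {m M : ℝ} (h : m ≤ M) (x : EuclideanSpace ℝ (Fin N)) :
    m ≤ wfun N m M x := by
  rcases wfun_two_valued N m M x with h' | h' <;> rw [h']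
  exact h

lemma inv_seq_tendsto {a : ℕ → ℝ} (ha : ∀ k : ℕ, (k : ℝ) + 1 ≤ a k) :
    Tendsto (fun k => 1 / a k) atTop (𝓝 0) := by
  have hpos : ∀ k : ℕ, 0 < a k := by
    intro k
    have h1 := ha k
    have h2 : (0:ℝ) ≤ (k:ℝ) := Nat.cast_nonneg k
    linarith
  apply squeeze_zero (fun k : ℕ => le_of_lt (one_div_pos.2 (hpos k)))
    (fun k : ℕ => ?_) tendsto_one_div_add_atTop_nhds_zero_nat
  have h2 : (0:ℝ) < (k:ℝ) + 1 := by positivity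
  exact one_div_le_one_div_of_le h2 (ha k)

/-- A nonnegative sequence dominated by `1/(k+1)` up to monotone comparison tends to zero. -/
lemma ratio_tendsto_zero {b : ℕ → ℝ} (h0 : ∀ k, 0 ≤ b k)
    (h1 : ∀ k : ℕ, b k ≤ 1 / ((k : ℝ) + 1)) : Tendsto b atTop (𝓝 0) :=
  squeeze_zero h0 h1 tendsto_one_div_add_atTop_nhds_zero_nat

end NoAVRAux

open NoAVRAux

set_option maxHeartbeats 2000000 in
theorem no_AVR_no_limit_example
    (N : ℕ) (hN : 0 < N) (m M : ℝ) (hm : 0 < m) (hmM : m < M)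
    (p : ℝ) (hp : 1 ≤ p) :
    ∃ w : EuclideanSpace ℝ (Fin N) → ℝ, Measurable w ∧
      (∀ x, w x = m ∨ w x = M) ∧
      ∀ (ν : Measure (EuclideanSpace ℝ (Fin N))) (ωN : ℝ)
        (u : EuclideanSpace ℝ (Fin N) → ℝ),
        ν = volume.withDensity (fun x => ENNReal.ofReal (w x)) →
        ωN = (volume (ball (0 : EuclideanSpace ℝ (Fin N)) 1)).toReal →
        u = Set.indicator (ball (0 : EuclideanSpace ℝ (Fin N)) 1) (fun _ => (1 : ℝ)) →
        (∀ (x : EuclideanSpace ℝ (Fin N)) (r : ℝ), 0 < r →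
          ENNReal.ofReal (m * ωN * r ^ (N : ℝ)) ≤ ν (ball x r) ∧
            ν (ball x r) ≤ ENNReal.ofReal (M * ωN * r ^ (N : ℝ))) ∧
        Filter.limsup (fun r : ℝ =>
            (ν (ball (0 : EuclideanSpace ℝ (Fin N)) r)).toReal / r ^ (N : ℝ))
          atTop = M * ωN ∧
        Filter.liminf (fun r : ℝ =>
            (ν (ball (0 : EuclideanSpace ℝ (Fin N)) r)).toReal / r ^ (N : ℝ))
          atTop = m * ωN ∧
        ENNReal.ofReal (2 * M * m * ωN ^ 2) ≤
          Filter.limsup (fun lam : ℝ => ENNReal.ofReal (lam ^ p) *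
            (ν.prod ν) {q : EuclideanSpace ℝ (Fin N) × EuclideanSpace ℝ (Fin N) |
              lam * dist q.1 q.2 ^ ((N : ℝ) / p) ≤ |u q.1 - u q.2|}) (𝓝[>] 0) ∧
        ENNReal.ofReal (2 * m ^ 2 * ωN ^ 2) <
          ENNReal.ofReal (2 * M * m * ωN ^ 2) ∧
        Filter.liminf (fun lam : ℝ => ENNReal.ofReal (lam ^ p) *
            (ν.prod ν) {q : EuclideanSpace ℝ (Fin N) × EuclideanSpace ℝ (Fin N) |
              lam * dist q.1 q.2 ^ ((N : ℝ) / p) ≤ |u q.1 - u q.2|}) (𝓝[>] 0) ≤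
          ENNReal.ofReal (2 * m ^ 2 * ωN ^ 2) := by
  haveI : Nonempty (Fin N) := ⟨⟨0, hN⟩⟩
  have hM : 0 < M := hm.trans hmM
  have hp0 : (0:ℝ) < p := lt_of_lt_of_le one_pos hp
  have hNp : (0:ℝ) < (N:ℝ)/p := div_pos (by exact_mod_cast hN) hp0
  refine ⟨wfun N m M, wfun_measurable N m M, wfun_two_valued N m M, ?_⟩
  intro ν ωN u hν hωN hu
  -- basic facts about ωN and volumes
  have hω0 : 0 < ωN := by
    rw [hωN]
    exact ENNReal.toReal_pos (measure_ball_pos _ _ one_pos).ne' measure_ball_lt_top.ne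
  have hκ : volume (ball (0 : EuclideanSpace ℝ (Fin N)) 1) = ENNReal.ofReal ωN := by
    rw [hωN, ENNReal.ofReal_toReal measure_ball_lt_top.ne]
  have hvol : ∀ (x : EuclideanSpace ℝ (Fin N)) (r : ℝ), 0 ≤ r →
      volume (ball x r) = ENNReal.ofReal (ωN * r ^ N) := by
    intro x r hr
    rw [Measure.addHaar_ball volume x hr, finrank_euclideanSpace_fin, hκ,
      ← ENNReal.ofReal_mul (pow_nonneg hr N), mul_comm (r ^ N) ωN]
  -- upper and lower bounds for balls
  have hup : ∀ (x : EuclideanSpace ℝ (Fin N)) (r : ℝ), 0 ≤ r →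
      ν (ball x r) ≤ ENNReal.ofReal (M * (ωN * r ^ N)) := by
    intro x r hr
    rw [hν]
    calc volume.withDensity (fun x => ENNReal.ofReal (wfun N m M x)) (ball x r)
        ≤ ENNReal.ofReal M * volume (ball x r) :=
          nu_le_on measurableSet_ball fun y _ => wfun_le N hmM.le y
      _ = ENNReal.ofReal (M * (ωN * r ^ N)) := by
          rw [hvol x r hr, ← ENNReal.ofReal_mul hM.le]
  have hlo : ∀ (x : EuclideanSpace ℝ (Fin N)) (r : ℝ), 0 ≤ r →
      ENNReal.ofReal (m * (ωN * r ^ N)) ≤ ν (ball x r) := by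
    intro x r hr
    rw [hν]
    calc ENNReal.ofReal (m * (ωN * r ^ N))
        = ENNReal.ofReal m * volume (ball x r) := by
          rw [hvol x r hr, ← ENNReal.ofReal_mul hm.le]
      _ ≤ volume.withDensity (fun x => ENNReal.ofReal (wfun N m M x)) (ball x r) :=
          nu_ge_on measurableSet_ball fun y _ => wfun_ge N hmM.le y
  have hFin : ∀ r : ℝ, 0 ≤ r → ν (ball (0 : EuclideanSpace ℝ (Fin N)) r) ≠ ⊤ :=
    fun r hr => ne_top_of_le_ne_top ENNReal.ofReal_ne_top (hup 0 r hr)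
  -- value of ν on the unit ball
  have hν1 : ν (ball (0 : EuclideanSpace ℝ (Fin N)) 1) = ENNReal.ofReal (m * ωN) := by
    rw [hν, nu_eq_on measurableSet_ball
      (fun x hx => wfun_low N m M x (by
        have := mem_ball_zero_iff.1 hx
        linarith)), hκ, ← ENNReal.ofReal_mul hm.le]
  -- annuli
  have hann_meas : ∀ a b : ℝ,
      MeasurableSet {x : EuclideanSpace ℝ (Fin N) | a ≤ ‖x‖ ∧ ‖x‖ < b} := by
    intro a b
    have : {x : EuclideanSpace ℝ (Fin N) | a ≤ ‖x‖ ∧ ‖x‖ < b}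
        = (fun x : EuclideanSpace ℝ (Fin N) => ‖x‖) ⁻¹' Set.Ico a b := rfl
    rw [this]
    exact measurable_norm measurableSet_Ico
  have hann_vol : ∀ a b : ℝ, 0 ≤ a → a ≤ b →
      volume {x : EuclideanSpace ℝ (Fin N) | a ≤ ‖x‖ ∧ ‖x‖ < b}
        = ENNReal.ofReal (ωN * (b ^ N - a ^ N)) := by
    intro a b ha hab
    have hb : 0 ≤ b := le_trans ha hab
    have hset : {x : EuclideanSpace ℝ (Fin N) | a ≤ ‖x‖ ∧ ‖x‖ < b}
        = ball (0 : EuclideanSpace ℝ (Fin N)) b \ ball (0 : EuclideanSpace ℝ (Fin N)) a := by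
      ext x
      simp only [Set.mem_setOf_eq, Set.mem_diff, mem_ball_zero_iff, not_lt]
      tauto
    rw [hset, measure_diff (ball_subset_ball hab) measurableSet_ball.nullMeasurableSet
      measure_ball_lt_top.ne, hvol 0 b hb, hvol 0 a ha,
      ← ENNReal.ofReal_sub _ (mul_nonneg hω0.le (pow_nonneg ha N))]
    congr 1
    ring
  have hνannM : ∀ (k : ℕ) (b : ℝ), tt (2*k) ≤ b → b ≤ tt (2*k+1) →
      ν {x : EuclideanSpace ℝ (Fin N) | tt (2*k) ≤ ‖x‖ ∧ ‖x‖ < b}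
        = ENNReal.ofReal (M * (ωN * (b ^ N - tt (2*k) ^ N))) := by
    intro k b h1 h2
    rw [hν, nu_eq_on (hann_meas _ _)
      (fun x hx => wfun_M N m M x k hx.1 (lt_of_lt_of_le hx.2 h2)),
      hann_vol _ _ (tt_pos _).le h1, ← ENNReal.ofReal_mul hM.le]
  have hνannm : ∀ (k : ℕ) (b : ℝ), tt (2*k+1) ≤ b → b ≤ tt (2*k+2) →
      ν {x : EuclideanSpace ℝ (Fin N) | tt (2*k+1) ≤ ‖x‖ ∧ ‖x‖ < b}
        = ENNReal.ofReal (m * (ωN * (b ^ N - tt (2*k+1) ^ N))) := by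
    intro k b h1 h2
    rw [hν, nu_eq_on (hann_meas _ _)
      (fun x hx => wfun_odd N m M x k hx.1 (lt_of_lt_of_le hx.2 h2)),
      hann_vol _ _ (tt_pos _).le h1, ← ENNReal.ofReal_mul hm.le]
  -- lower bound for ν at odd radii
  have hballS : ∀ k : ℕ,
      ENNReal.ofReal (M * (ωN * (tt (2*k+1) ^ N - tt (2*k) ^ N)))
        ≤ ν (ball (0 : EuclideanSpace ℝ (Fin N)) (tt (2*k+1))) := by
    intro k
    rw [← hνannM k (tt (2*k+1)) (tt_mono.monotone (by omega)) le_rfl]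
    apply measure_mono
    intro x hx
    exact mem_ball_zero_iff.2 hx.2
  -- upper bound for ν at even radii
  have hballT : ∀ k : ℕ,
      ν (ball (0 : EuclideanSpace ℝ (Fin N)) (tt (2*k+2)))
        ≤ ENNReal.ofReal (M * (ωN * tt (2*k+1) ^ N)
            + m * (ωN * (tt (2*k+2) ^ N - tt (2*k+1) ^ N))) := by
    intro k
    have hsub : ball (0 : EuclideanSpace ℝ (Fin N)) (tt (2*k+2))
        ⊆ ball (0 : EuclideanSpace ℝ (Fin N)) (tt (2*k+1))
          ∪ {x : EuclideanSpace ℝ (Fin N) | tt (2*k+1) ≤ ‖x‖ ∧ ‖x‖ < tt (2*k+2)} := by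
      intro x hx
      rw [mem_ball_zero_iff] at hx
      by_cases h : ‖x‖ < tt (2*k+1)
      · exact Or.inl (mem_ball_zero_iff.2 h)
      · exact Or.inr ⟨not_lt.1 h, hx⟩
    calc ν (ball (0 : EuclideanSpace ℝ (Fin N)) (tt (2*k+2)))
        ≤ ν (ball (0 : EuclideanSpace ℝ (Fin N)) (tt (2*k+1)))
          + ν {x : EuclideanSpace ℝ (Fin N) | tt (2*k+1) ≤ ‖x‖ ∧ ‖x‖ < tt (2*k+2)} :=
          le_trans (measure_mono hsub) (measure_union_le _ _)
      _ ≤ ENNReal.ofReal (M * (ωN * tt (2*k+1) ^ N))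
          + ENNReal.ofReal (m * (ωN * (tt (2*k+2) ^ N - tt (2*k+1) ^ N))) := by
          apply add_le_add
          · exact hup 0 _ (tt_pos _).le
          · rw [hνannm k (tt (2*k+2)) (tt_mono.monotone (by omega)) le_rfl]
      _ = ENNReal.ofReal (M * (ωN * tt (2*k+1) ^ N)
            + m * (ωN * (tt (2*k+2) ^ N - tt (2*k+1) ^ N))) := by
          have h1 : tt (2*k+1) ^ N ≤ tt (2*k+2) ^ N :=
            pow_le_pow_left₀ (tt_pos _).le (tt_mono.monotone (by omega)) N
          have h2 : 0 ≤ tt (2*k+2) ^ N - tt (2*k+1) ^ N := by linarith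
          rw [← ENNReal.ofReal_add
            (mul_nonneg hM.le (mul_nonneg hω0.le (pow_nonneg (tt_pos _).le N)))
            (mul_nonneg hm.le (mul_nonneg hω0.le h2))]
  -- pointwise bounds for the ratio function
  have hFub : ∀ r : ℝ, 0 < r →
      (ν (ball (0 : EuclideanSpace ℝ (Fin N)) r)).toReal / r ^ (N:ℝ) ≤ M * ωN := by
    intro r hr
    have h1 : (ν (ball (0 : EuclideanSpace ℝ (Fin N)) r)).toReal ≤ M * (ωN * r ^ N) :=
      ENNReal.toReal_le_of_le_ofReal
        (mul_nonneg hM.le (mul_nonneg hω0.le (pow_nonneg hr.le N))) (hup 0 r hr.le)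
    rw [Real.rpow_natCast, div_le_iff₀ (pow_pos hr N)]
    nlinarith [pow_pos hr N]
  have hFlb : ∀ r : ℝ, 0 < r →
      m * ωN ≤ (ν (ball (0 : EuclideanSpace ℝ (Fin N)) r)).toReal / r ^ (N:ℝ) := by
    intro r hr
    have h1 : m * (ωN * r ^ N) ≤ (ν (ball (0 : EuclideanSpace ℝ (Fin N)) r)).toReal :=
      (ENNReal.ofReal_le_iff_le_toReal (hFin r hr.le)).1 (hlo 0 r hr.le)
    rw [Real.rpow_natCast, le_div_iff₀ (pow_pos hr N)]
    nlinarith [pow_pos hr N]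
  -- facts about u
  have hu1 : ∀ x : EuclideanSpace ℝ (Fin N), x ∈ ball (0 : EuclideanSpace ℝ (Fin N)) 1 → u x = 1 := by
    intro x hx; rw [hu]; exact Set.indicator_of_mem hx _
  have hu0 : ∀ x : EuclideanSpace ℝ (Fin N), x ∉ ball (0 : EuclideanSpace ℝ (Fin N)) 1 → u x = 0 := by
    intro x hx; rw [hu]; exact Set.indicator_of_notMem hx _
  haveI hSF : SFinite ν := by rw [hν]; infer_instance
  -- ν has no atoms, hence the diagonal is ν ⊗ ν null
  have hsing : ∀ x : EuclideanSpace ℝ (Fin N), ν {x} = 0 := by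
    intro x
    have h1 : ν {x} ≤ ENNReal.ofReal M * volume {x} := by
      rw [hν]; exact nu_le_on (measurableSet_singleton x) fun y _ => wfun_le N hmM.le y
    simpa [measure_singleton] using h1
  have hdiag : (ν.prod ν) (Set.diagonal (EuclideanSpace ℝ (Fin N))) = 0 := by
    have hpre : ∀ x : EuclideanSpace ℝ (Fin N),
        Prod.mk x ⁻¹' Set.diagonal (EuclideanSpace ℝ (Fin N)) = {x} := by
      intro x; ext y; simp [Set.diagonal, eq_comm]
    rw [Measure.prod_apply isClosed_diagonal.measurableSet]
    have hz : ∀ x : EuclideanSpace ℝ (Fin N),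
        ν (Prod.mk x ⁻¹' Set.diagonal (EuclideanSpace ℝ (Fin N))) = 0 := by
      intro x; rw [hpre x]; exact hsing x
    simp only [hz]
    exact lintegral_zero
  -- membership in E_lam for pairs across the unit sphere at distance ≤ R
  have hmemE : ∀ R : ℝ, 0 < R → ∀ x y : EuclideanSpace ℝ (Fin N),
      x ∈ ball (0 : EuclideanSpace ℝ (Fin N)) 1 → 1 ≤ ‖y‖ → dist x y ≤ R →
      R ^ (-((N:ℝ)/p)) * dist x y ^ ((N:ℝ)/p) ≤ |u x - u y|
        ∧ R ^ (-((N:ℝ)/p)) * dist y x ^ ((N:ℝ)/p) ≤ |u y - u x| := by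
    intro R hR x y hx hy hd
    have h1 : u x = 1 := hu1 x hx
    have h2 : u y = 0 := hu0 y (by rw [mem_ball_zero_iff]; push_neg; linarith)
    have key : R ^ (-((N:ℝ)/p)) * dist x y ^ ((N:ℝ)/p) ≤ 1 := by
      have hle : dist x y ^ ((N:ℝ)/p) ≤ R ^ ((N:ℝ)/p) :=
        Real.rpow_le_rpow dist_nonneg hd hNp.le
      have hpos : (0:ℝ) < R ^ (-((N:ℝ)/p)) := Real.rpow_pos_of_pos hR _
      calc R ^ (-((N:ℝ)/p)) * dist x y ^ ((N:ℝ)/p)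
          ≤ R ^ (-((N:ℝ)/p)) * R ^ ((N:ℝ)/p) := mul_le_mul_of_nonneg_left hle hpos.le
        _ = 1 := by rw [← Real.rpow_add hR]; simp
    constructor
    · rw [h1, h2]; simpa using key
    · rw [h1, h2, dist_comm y x]; simpa using key
  -- E_lam is contained in the diagonal plus two rectangles
  have hsubE : ∀ R : ℝ, 0 < R →
      {q : EuclideanSpace ℝ (Fin N) × EuclideanSpace ℝ (Fin N) |
          R ^ (-((N:ℝ)/p)) * dist q.1 q.2 ^ ((N:ℝ)/p) ≤ |u q.1 - u q.2|}
        ⊆ Set.diagonal (EuclideanSpace ℝ (Fin N))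
          ∪ (ball (0 : EuclideanSpace ℝ (Fin N)) 1 ×ˢ ball (0 : EuclideanSpace ℝ (Fin N)) (R+1)
            ∪ ball (0 : EuclideanSpace ℝ (Fin N)) (R+1) ×ˢ ball (0 : EuclideanSpace ℝ (Fin N)) 1) := by
    intro R hR q hq
    simp only [Set.mem_setOf_eq] at hq
    have hlampos : (0:ℝ) < R ^ (-((N:ℝ)/p)) := Real.rpow_pos_of_pos hR _
    have hdist_le : ∀ a b : EuclideanSpace ℝ (Fin N),
        R ^ (-((N:ℝ)/p)) * dist a b ^ ((N:ℝ)/p) ≤ 1 → dist a b ≤ R := by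
      intro a b h
      have h1 : R ^ (-((N:ℝ)/p)) * dist a b ^ ((N:ℝ)/p)
          ≤ R ^ (-((N:ℝ)/p)) * R ^ ((N:ℝ)/p) := by
        rw [← Real.rpow_add hR]; simpa using h
      have h2 : dist a b ^ ((N:ℝ)/p) ≤ R ^ ((N:ℝ)/p) :=
        le_of_mul_le_mul_left h1 hlampos
      exact (Real.rpow_le_rpow_iff dist_nonneg hR.le hNp).1 h2
    by_cases hx : q.1 ∈ ball (0 : EuclideanSpace ℝ (Fin N)) 1
    · by_cases hy : q.2 ∈ ball (0 : EuclideanSpace ℝ (Fin N)) 1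
      · refine Or.inr (Or.inl ⟨hx, ?_⟩)
        rw [mem_ball_zero_iff] at hy ⊢
        linarith
      · have habs : |u q.1 - u q.2| = 1 := by rw [hu1 _ hx, hu0 _ hy]; norm_num
        rw [habs] at hq
        have hd := hdist_le _ _ hq
        refine Or.inr (Or.inl ⟨hx, ?_⟩)
        rw [mem_ball_zero_iff]
        have t := dist_triangle q.2 q.1 (0 : EuclideanSpace ℝ (Fin N))
        rw [dist_zero_right, dist_zero_right] at t
        rw [dist_comm] at t
        have hxn : ‖q.1‖ < 1 := mem_ball_zero_iff.1 hx
        linarith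
    · by_cases hy : q.2 ∈ ball (0 : EuclideanSpace ℝ (Fin N)) 1
      · have habs : |u q.1 - u q.2| = 1 := by rw [hu0 _ hx, hu1 _ hy]; norm_num
        rw [habs] at hq
        have hd := hdist_le _ _ hq
        refine Or.inr (Or.inr ⟨?_, hy⟩)
        rw [mem_ball_zero_iff]
        have t := dist_triangle q.1 q.2 (0 : EuclideanSpace ℝ (Fin N))
        rw [dist_zero_right, dist_zero_right] at t
        have hyn : ‖q.2‖ < 1 := mem_ball_zero_iff.1 hy
        linarith
      · left
        have habs : u q.1 - u q.2 = 0 := by rw [hu0 _ hx, hu0 _ hy]; ring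
        rw [habs, abs_zero] at hq
        have h1 : dist q.1 q.2 ^ ((N:ℝ)/p) ≤ 0 := by
          by_contra hpos
          push_neg at hpos
          nlinarith [mul_pos hlampos hpos]
        have h2 : dist q.1 q.2 ^ ((N:ℝ)/p) = 0 :=
          le_antisymm h1 (Real.rpow_nonneg dist_nonneg _)
        have h3 : dist q.1 q.2 = 0 := by
          by_contra hne
          have hgt : (0:ℝ) < dist q.1 q.2 := lt_of_le_of_ne dist_nonneg (Ne.symm hne)
          exact absurd h2 (ne_of_gt (Real.rpow_pos_of_pos hgt _))
        exact dist_eq_zero.1 h3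
  -- upper bound for the measure of E_lam
  have hEub : ∀ R : ℝ, 0 < R →
      (ν.prod ν) {q : EuclideanSpace ℝ (Fin N) × EuclideanSpace ℝ (Fin N) |
          R ^ (-((N:ℝ)/p)) * dist q.1 q.2 ^ ((N:ℝ)/p) ≤ |u q.1 - u q.2|}
        ≤ 2 * (ν (ball (0 : EuclideanSpace ℝ (Fin N)) 1)
            * ν (ball (0 : EuclideanSpace ℝ (Fin N)) (R+1))) := by
    intro R hR
    calc (ν.prod ν) {q : EuclideanSpace ℝ (Fin N) × EuclideanSpace ℝ (Fin N) |
          R ^ (-((N:ℝ)/p)) * dist q.1 q.2 ^ ((N:ℝ)/p) ≤ |u q.1 - u q.2|}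
        ≤ (ν.prod ν) (Set.diagonal (EuclideanSpace ℝ (Fin N))
            ∪ (ball (0 : EuclideanSpace ℝ (Fin N)) 1 ×ˢ ball (0 : EuclideanSpace ℝ (Fin N)) (R+1)
              ∪ ball (0 : EuclideanSpace ℝ (Fin N)) (R+1) ×ˢ ball (0 : EuclideanSpace ℝ (Fin N)) 1)) :=
          measure_mono (hsubE R hR)
      _ ≤ (ν.prod ν) (Set.diagonal (EuclideanSpace ℝ (Fin N)))
          + ((ν.prod ν) (ball (0 : EuclideanSpace ℝ (Fin N)) 1 ×ˢ ball (0 : EuclideanSpace ℝ (Fin N)) (R+1))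
            + (ν.prod ν) (ball (0 : EuclideanSpace ℝ (Fin N)) (R+1) ×ˢ ball (0 : EuclideanSpace ℝ (Fin N)) 1)) := by
          refine le_trans (measure_union_le _ _) ?_
          gcongr
          exact measure_union_le _ _
      _ = 2 * (ν (ball (0 : EuclideanSpace ℝ (Fin N)) 1)
            * ν (ball (0 : EuclideanSpace ℝ (Fin N)) (R+1))) := by
          rw [hdiag, Measure.prod_prod, Measure.prod_prod]
          ring
  -- lower bound for the measure of E_lam at the special radii
  have hElb : ∀ k : ℕ,
      2 * (ν (ball (0 : EuclideanSpace ℝ (Fin N)) 1)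
          * ν {x : EuclideanSpace ℝ (Fin N) | tt (2*k) ≤ ‖x‖ ∧ ‖x‖ < tt (2*k+1)})
        ≤ (ν.prod ν) {q : EuclideanSpace ℝ (Fin N) × EuclideanSpace ℝ (Fin N) |
            (tt (2*k+1) + 1) ^ (-((N:ℝ)/p)) * dist q.1 q.2 ^ ((N:ℝ)/p) ≤ |u q.1 - u q.2|} := by
    intro k
    have hRpos : (0:ℝ) < tt (2*k+1) + 1 := by linarith [tt_pos (2*k+1)]
    have hsub : (ball (0 : EuclideanSpace ℝ (Fin N)) 1
          ×ˢ {x : EuclideanSpace ℝ (Fin N) | tt (2*k) ≤ ‖x‖ ∧ ‖x‖ < tt (2*k+1)})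
        ∪ ({x : EuclideanSpace ℝ (Fin N) | tt (2*k) ≤ ‖x‖ ∧ ‖x‖ < tt (2*k+1)}
          ×ˢ ball (0 : EuclideanSpace ℝ (Fin N)) 1)
        ⊆ {q : EuclideanSpace ℝ (Fin N) × EuclideanSpace ℝ (Fin N) |
            (tt (2*k+1) + 1) ^ (-((N:ℝ)/p)) * dist q.1 q.2 ^ ((N:ℝ)/p) ≤ |u q.1 - u q.2|} := by
      have haux : ∀ a b : EuclideanSpace ℝ (Fin N), a ∈ ball (0 : EuclideanSpace ℝ (Fin N)) 1 →
          tt (2*k) ≤ ‖b‖ → ‖b‖ < tt (2*k+1) → dist a b ≤ tt (2*k+1) + 1 ∧ 1 ≤ ‖b‖ := by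
        intro a b ha hb1 hb2
        have ha1 : ‖a‖ < 1 := mem_ball_zero_iff.1 ha
        constructor
        · have t := dist_triangle a (0 : EuclideanSpace ℝ (Fin N)) b
          rw [dist_zero_right] at t
          have t2 : dist (0 : EuclideanSpace ℝ (Fin N)) b = ‖b‖ := by
            rw [dist_comm, dist_zero_right]
          rw [t2] at t
          linarith
        · linarith [tt_two (2*k)]
      rintro ⟨a, b⟩ (⟨ha, hb⟩ | ⟨ha, hb⟩)
      · obtain ⟨hd, hn⟩ := haux a b ha hb.1 hb.2
        exact (hmemE _ hRpos a b ha hn hd).1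
      · obtain ⟨hd, hn⟩ := haux b a hb ha.1 ha.2
        exact (hmemE _ hRpos b a hb hn hd).2
    have hdisj : Disjoint (ball (0 : EuclideanSpace ℝ (Fin N)) 1
          ×ˢ {x : EuclideanSpace ℝ (Fin N) | tt (2*k) ≤ ‖x‖ ∧ ‖x‖ < tt (2*k+1)})
        ({x : EuclideanSpace ℝ (Fin N) | tt (2*k) ≤ ‖x‖ ∧ ‖x‖ < tt (2*k+1)}
          ×ˢ ball (0 : EuclideanSpace ℝ (Fin N)) 1) := by
      rw [Set.disjoint_left]
      rintro ⟨a, b⟩ ⟨ha, hb⟩ ⟨ha', hb'⟩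
      have h1 : ‖a‖ < 1 := mem_ball_zero_iff.1 ha
      have h2 : 2 ≤ ‖a‖ := le_trans (tt_two (2*k)) ha'.1
      linarith
    calc 2 * (ν (ball (0 : EuclideanSpace ℝ (Fin N)) 1)
          * ν {x : EuclideanSpace ℝ (Fin N) | tt (2*k) ≤ ‖x‖ ∧ ‖x‖ < tt (2*k+1)})
        = (ν.prod ν) (ball (0 : EuclideanSpace ℝ (Fin N)) 1
            ×ˢ {x : EuclideanSpace ℝ (Fin N) | tt (2*k) ≤ ‖x‖ ∧ ‖x‖ < tt (2*k+1)})
          + (ν.prod ν) ({x : EuclideanSpace ℝ (Fin N) | tt (2*k) ≤ ‖x‖ ∧ ‖x‖ < tt (2*k+1)}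
            ×ˢ ball (0 : EuclideanSpace ℝ (Fin N)) 1) := by
          rw [Measure.prod_prod, Measure.prod_prod]
          ring
      _ = (ν.prod ν) ((ball (0 : EuclideanSpace ℝ (Fin N)) 1
            ×ˢ {x : EuclideanSpace ℝ (Fin N) | tt (2*k) ≤ ‖x‖ ∧ ‖x‖ < tt (2*k+1)})
          ∪ ({x : EuclideanSpace ℝ (Fin N) | tt (2*k) ≤ ‖x‖ ∧ ‖x‖ < tt (2*k+1)}
            ×ˢ ball (0 : EuclideanSpace ℝ (Fin N)) 1)) :=
          (measure_union hdisj ((hann_meas _ _).prod measurableSet_ball)).symm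
      _ ≤ _ := measure_mono hsub
  -- the exponent identity
  have hlamp : ∀ R : ℝ, 0 < R → (R ^ (-((N:ℝ)/p))) ^ p = (R ^ N)⁻¹ := by
    intro R hR
    rw [← Real.rpow_natCast R N, ← Real.rpow_mul hR.le,
      show -((N:ℝ)/p) * p = -(N:ℝ) by field_simp, Real.rpow_neg hR.le]
  refine ⟨?_, ?_, ?_, ?_, ?_, ?_⟩
  -- Goal 1 : Ahlfors regularity
  · intro x r hr
    constructor
    · have heq : m * ωN * r ^ (N:ℝ) = m * (ωN * r ^ N) := by
        rw [Real.rpow_natCast]; ring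
      rw [heq]
      exact hlo x r hr.le
    · have heq : M * ωN * r ^ (N:ℝ) = M * (ωN * r ^ N) := by
        rw [Real.rpow_natCast]; ring
      rw [heq]
      exact hup x r hr.le
  -- Goal 2 : limsup of volume ratio is M * ωN
  · apply real_limsup_eq (fun k => tt (2*k+1))
    · have hmono : ∀ k : ℕ, k ≤ 2*k+1 := fun k => by omega
      have hg : Tendsto (fun k : ℕ => 2*k+1) atTop atTop :=
        tendsto_atTop_mono hmono tendsto_id
      exact tt_tendsto.comp hg
    · -- squeeze between g and the constant M * ωN
      have hρ : Tendsto (fun k : ℕ => tt (2*k) / tt (2*k+1)) atTop (𝓝 0) := by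
        apply ratio_tendsto_zero (fun k => div_nonneg (tt_pos _).le (tt_pos _).le)
        intro k
        have h1 := tt_ge (2*k)
        have h2 := tt_succ (2*k)
        have h3 := tt_pos (2*k)
        have h4 := tt_pos (2*k+1)
        rw [div_le_div_iff₀ h4 (by positivity)]
        have hk : (k:ℝ) + 1 ≤ tt (2*k) := by
          have : ((2*k : ℕ):ℝ) + 2 ≤ tt (2*k) := h1
          push_cast at this ⊢
          linarith
        rw [h2]
        nlinarith
      have hg : Tendsto (fun k : ℕ =>
          M * (ωN * (tt (2*k+1) ^ N - tt (2*k) ^ N)) / tt (2*k+1) ^ N) atTop (𝓝 (M * ωN)) := by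
        have hcongr : ∀ k : ℕ,
            M * ωN - M * ωN * (tt (2*k) / tt (2*k+1)) ^ N
              = M * (ωN * (tt (2*k+1) ^ N - tt (2*k) ^ N)) / tt (2*k+1) ^ N := by
          intro k
          have h4 : tt (2*k+1) ≠ 0 := (tt_pos _).ne'
          simp only [div_pow]
          field_simp
        have hlim : Tendsto (fun k : ℕ =>
            M * ωN - M * ωN * (tt (2*k) / tt (2*k+1)) ^ N) atTop (𝓝 (M * ωN)) := by
          have h0 : Tendsto (fun k : ℕ => M * ωN * (tt (2*k) / tt (2*k+1)) ^ N) atTop (𝓝 0) := by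
            have := (tendsto_const_nhds (x := M * ωN)).mul (hρ.pow N)
            simpa [zero_pow hN.ne'] using this
          simpa using (tendsto_const_nhds (x := M * ωN)).sub h0
        exact Tendsto.congr hcongr hlim
      apply tendsto_of_tendsto_of_tendsto_of_le_of_le hg tendsto_const_nhds
      · intro k
        have h1 := hballS k
        have h2 : M * (ωN * (tt (2*k+1) ^ N - tt (2*k) ^ N))
            ≤ (ν (ball (0 : EuclideanSpace ℝ (Fin N)) (tt (2*k+1)))).toReal :=
          (ENNReal.ofReal_le_iff_le_toReal (hFin _ (tt_pos _).le)).1 h1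
        simp only [Real.rpow_natCast]
        exact (div_le_div_iff_of_pos_right (pow_pos (tt_pos _) N)).2 h2
      · intro k
        exact hFub _ (tt_pos _)
    · filter_upwards [eventually_ge_atTop (1:ℝ)] with r hr
      exact hFub r (by linarith)
  -- Goal 3 : liminf of volume ratio is m * ωN
  · apply real_liminf_eq (fun k => tt (2*k+2))
    · have hmono : ∀ k : ℕ, k ≤ 2*k+2 := fun k => by omega
      have hg : Tendsto (fun k : ℕ => 2*k+2) atTop atTop :=
        tendsto_atTop_mono hmono tendsto_id
      exact tt_tendsto.comp hg
    · have hσ : Tendsto (fun k : ℕ => tt (2*k+1) / tt (2*k+2)) atTop (𝓝 0) := by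
        apply ratio_tendsto_zero (fun k => div_nonneg (tt_pos _).le (tt_pos _).le)
        intro k
        have h1 := tt_ge (2*k+1)
        have h2 := tt_succ (2*k+1)
        have h3 := tt_pos (2*k+1)
        have h4 := tt_pos (2*k+2)
        rw [div_le_div_iff₀ h4 (by positivity)]
        have hk : (k:ℝ) + 1 ≤ tt (2*k+1) := by
          have : ((2*k+1 : ℕ):ℝ) + 2 ≤ tt (2*k+1) := h1
          push_cast at this ⊢
          linarith
        rw [h2]
        nlinarith
      have hh : Tendsto (fun k : ℕ =>
          (M * (ωN * tt (2*k+1) ^ N) + m * (ωN * (tt (2*k+2) ^ N - tt (2*k+1) ^ N)))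
            / tt (2*k+2) ^ N) atTop (𝓝 (m * ωN)) := by
        have hcongr : ∀ k : ℕ,
            m * ωN + (M * ωN - m * ωN) * (tt (2*k+1) / tt (2*k+2)) ^ N
              = (M * (ωN * tt (2*k+1) ^ N) + m * (ωN * (tt (2*k+2) ^ N - tt (2*k+1) ^ N)))
                  / tt (2*k+2) ^ N := by
          intro k
          have h4 : tt (2*k+2) ≠ 0 := (tt_pos _).ne'
          simp only [div_pow]
          field_simp
          ring
        have hlim : Tendsto (fun k : ℕ =>
            m * ωN + (M * ωN - m * ωN) * (tt (2*k+1) / tt (2*k+2)) ^ N) atTop (𝓝 (m * ωN)) := by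
          have h0 : Tendsto (fun k : ℕ =>
              (M * ωN - m * ωN) * (tt (2*k+1) / tt (2*k+2)) ^ N) atTop (𝓝 0) := by
            have := (tendsto_const_nhds (x := M * ωN - m * ωN)).mul (hσ.pow N)
            simpa [zero_pow hN.ne'] using this
          simpa using (tendsto_const_nhds (x := m * ωN)).add h0
        exact Tendsto.congr hcongr hlim
      apply tendsto_of_tendsto_of_tendsto_of_le_of_le tendsto_const_nhds hh
      · intro k
        exact hFlb _ (tt_pos _)
      · intro k
        have h1 := hballT k
        have h2 : (ν (ball (0 : EuclideanSpace ℝ (Fin N)) (tt (2*k+2)))).toReal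
            ≤ M * (ωN * tt (2*k+1) ^ N) + m * (ωN * (tt (2*k+2) ^ N - tt (2*k+1) ^ N)) := by
          apply ENNReal.toReal_le_of_le_ofReal ?_ h1
          have hle : tt (2*k+1) ^ N ≤ tt (2*k+2) ^ N :=
            pow_le_pow_left₀ (tt_pos _).le (tt_mono.monotone (by omega)) N
          have h5 : 0 ≤ tt (2*k+2) ^ N - tt (2*k+1) ^ N := by linarith
          exact add_nonneg
            (mul_nonneg hM.le (mul_nonneg hω0.le (pow_nonneg (tt_pos _).le N)))
            (mul_nonneg hm.le (mul_nonneg hω0.le h5))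
        simp only [Real.rpow_natCast]
        exact (div_le_div_iff_of_pos_right (pow_pos (tt_pos _) N)).2 h2
    · filter_upwards [eventually_ge_atTop (1:ℝ)] with r hr
      exact hFlb r (by linarith)
  -- Goal 4 : limsup lower bound
  · set Φ : ℝ → ENNReal := fun lam : ℝ => ENNReal.ofReal (lam ^ p) *
        (ν.prod ν) {q : EuclideanSpace ℝ (Fin N) × EuclideanSpace ℝ (Fin N) |
          lam * dist q.1 q.2 ^ ((N : ℝ) / p) ≤ |u q.1 - u q.2|} with hΦ
    have hRpos : ∀ k : ℕ, (0:ℝ) < tt (2*k+1) + 1 := fun k => by linarith [tt_pos (2*k+1)]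
    set ll : ℕ → ℝ := fun k => (tt (2*k+1) + 1) ^ (-((N:ℝ)/p)) with hll
    set c : ℕ → ℝ := fun k => ((tt (2*k+1) + 1) ^ N)⁻¹
        * (2 * ((m * ωN) * (M * (ωN * (tt (2*k+1) ^ N - tt (2*k) ^ N))))) with hc
    have hΦlb : ∀ k : ℕ, ENNReal.ofReal (c k) ≤ Φ (ll k) := by
      intro k
      have h1 : (ll k) ^ p = ((tt (2*k+1) + 1) ^ N)⁻¹ := hlamp _ (hRpos k)
      have h2 := hElb k
      rw [hν1, hνannM k (tt (2*k+1)) (tt_mono.monotone (by omega)) le_rfl] at h2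
      have h3 : (2:ENNReal) * (ENNReal.ofReal (m * ωN)
            * ENNReal.ofReal (M * (ωN * (tt (2*k+1) ^ N - tt (2*k) ^ N))))
          = ENNReal.ofReal (2 * ((m * ωN) * (M * (ωN * (tt (2*k+1) ^ N - tt (2*k) ^ N))))) := by
        rw [ENNReal.ofReal_mul (by norm_num : (0:ℝ) ≤ 2),
          ENNReal.ofReal_mul (mul_nonneg hm.le hω0.le), ENNReal.ofReal_ofNat]
      rw [h3] at h2
      simp only [hΦ, hll, hc]
      rw [h1]
      rw [ENNReal.ofReal_mul (inv_nonneg.2 (pow_nonneg (hRpos k).le N))]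
      exact mul_le_mul_right h2 _
    have hα : Tendsto (fun k : ℕ => tt (2*k) / (tt (2*k+1) + 1)) atTop (𝓝 0) := by
      apply ratio_tendsto_zero
        (fun k => div_nonneg (tt_pos _).le (hRpos k).le)
      intro k
      have h1 := tt_ge (2*k)
      have h2 := tt_succ (2*k)
      have h3 := tt_pos (2*k)
      rw [div_le_div_iff₀ (hRpos k) (by positivity)]
      have hk : (k:ℝ) + 1 ≤ tt (2*k) := by
        have h4 : ((2*k : ℕ):ℝ) + 2 ≤ tt (2*k) := h1
        push_cast at h4 ⊢
        linarith
      rw [h2]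
      nlinarith
    have hβ : Tendsto (fun k : ℕ => tt (2*k+1) / (tt (2*k+1) + 1)) atTop (𝓝 1) := by
      have hid : ∀ k : ℕ, 1 - 1 / (tt (2*k+1) + 1) = tt (2*k+1) / (tt (2*k+1) + 1) := by
        intro k
        have h4 : tt (2*k+1) + 1 ≠ 0 := (hRpos k).ne'
        field_simp
        ring
      have h0 : Tendsto (fun k : ℕ => 1 / (tt (2*k+1) + 1)) atTop (𝓝 0) := by
        apply inv_seq_tendsto
        intro k
        have h4 := tt_ge (2*k+1)
        have h5 : ((2*k+1 : ℕ):ℝ) + 2 ≤ tt (2*k+1) := h4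
        push_cast at h5 ⊢
        linarith
      have := (tendsto_const_nhds (x := (1:ℝ))).sub h0
      rw [sub_zero] at this
      exact Tendsto.congr hid this
    have hc_tendsto : Tendsto c atTop (𝓝 (2 * M * m * ωN ^ 2)) := by
      have hid : ∀ k : ℕ,
          2 * M * m * ωN ^ 2 * ((tt (2*k+1) / (tt (2*k+1) + 1)) ^ N
              - (tt (2*k) / (tt (2*k+1) + 1)) ^ N) = c k := by
        intro k
        simp only [hc]
        have h4 : tt (2*k+1) + 1 ≠ 0 := (hRpos k).ne'
        simp only [div_pow]
        field_simp
      have hcomb := (tendsto_const_nhds (x := 2 * M * m * ωN ^ 2)).mul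
        ((hβ.pow N).sub (hα.pow N))
      have hval : 2 * M * m * ωN ^ 2 * ((1:ℝ) ^ N - 0 ^ N) = 2 * M * m * ωN ^ 2 := by
        rw [one_pow, zero_pow hN.ne']
        ring
      rw [hval] at hcomb
      exact Tendsto.congr hid hcomb
    have hllt : Tendsto ll atTop (𝓝[>] (0:ℝ)) := by
      rw [tendsto_nhdsWithin_iff]
      constructor
      · have hmono : ∀ k : ℕ, k ≤ 2*k+1 := fun k => by omega
        have hg : Tendsto (fun k : ℕ => 2*k+1) atTop atTop :=
          tendsto_atTop_mono hmono tendsto_id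
        have h1 : Tendsto (fun k : ℕ => tt (2*k+1) + 1) atTop atTop :=
          tendsto_atTop_add_const_right _ 1 (tt_tendsto.comp hg)
        exact (tendsto_rpow_neg_atTop hNp).comp h1
      · exact Eventually.of_forall fun k => Set.mem_Ioi.2 (Real.rpow_pos_of_pos (hRpos k) _)
    calc ENNReal.ofReal (2 * M * m * ωN ^ 2)
        = liminf (fun k => ENNReal.ofReal (c k)) atTop :=
          ((ENNReal.tendsto_ofReal hc_tendsto).liminf_eq).symm
      _ ≤ liminf (fun k => Φ (ll k)) atTop :=
          liminf_le_liminf (Eventually.of_forall hΦlb)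
      _ ≤ limsup (fun k => Φ (ll k)) atTop := liminf_le_limsup
      _ = limsup Φ (map ll atTop) := limsup_comp Φ ll atTop
      _ ≤ limsup Φ (𝓝[>] 0) := limsup_le_limsup_of_le hllt
  -- Goal 5 : strict inequality
  · have h1 : 0 < m * (M - m) * (ωN * ωN) :=
      mul_pos (mul_pos hm (sub_pos.2 hmM)) (mul_pos hω0 hω0)
    have h2 : 0 < M * m * (ωN * ωN) := mul_pos (mul_pos hM hm) (mul_pos hω0 hω0)
    have hlt : 2 * m ^ 2 * ωN ^ 2 < 2 * M * m * ωN ^ 2 := by nlinarith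
    exact (ENNReal.ofReal_lt_ofReal_iff (by nlinarith)).2 hlt
  -- Goal 6 : liminf upper bound
  · set Φ : ℝ → ENNReal := fun lam : ℝ => ENNReal.ofReal (lam ^ p) *
        (ν.prod ν) {q : EuclideanSpace ℝ (Fin N) × EuclideanSpace ℝ (Fin N) |
          lam * dist q.1 q.2 ^ ((N : ℝ) / p) ≤ |u q.1 - u q.2|} with hΦ
    have hRpos : ∀ k : ℕ, (0:ℝ) < tt (2*k+2) - 1 := fun k => by linarith [tt_two (2*k+2)]
    set ll : ℕ → ℝ := fun k => (tt (2*k+2) - 1) ^ (-((N:ℝ)/p)) with hll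
    set c : ℕ → ℝ := fun k => ((tt (2*k+2) - 1) ^ N)⁻¹
        * (2 * ((m * ωN) * (M * (ωN * tt (2*k+1) ^ N)
            + m * (ωN * (tt (2*k+2) ^ N - tt (2*k+1) ^ N))))) with hc
    have hY : ∀ k : ℕ, 0 ≤ M * (ωN * tt (2*k+1) ^ N)
        + m * (ωN * (tt (2*k+2) ^ N - tt (2*k+1) ^ N)) := by
      intro k
      have hle : tt (2*k+1) ^ N ≤ tt (2*k+2) ^ N :=
        pow_le_pow_left₀ (tt_pos _).le (tt_mono.monotone (by omega)) N
      have h5 : 0 ≤ tt (2*k+2) ^ N - tt (2*k+1) ^ N := by linarith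
      exact add_nonneg
        (mul_nonneg hM.le (mul_nonneg hω0.le (pow_nonneg (tt_pos _).le N)))
        (mul_nonneg hm.le (mul_nonneg hω0.le h5))
    have hΦub : ∀ k : ℕ, Φ (ll k) ≤ ENNReal.ofReal (c k) := by
      intro k
      have h1 : (ll k) ^ p = ((tt (2*k+2) - 1) ^ N)⁻¹ := hlamp _ (hRpos k)
      have h2 := hEub (tt (2*k+2) - 1) (hRpos k)
      rw [sub_add_cancel, hν1] at h2
      have h4 : ν (ball (0 : EuclideanSpace ℝ (Fin N)) (tt (2*k+2)))
          ≤ ENNReal.ofReal (M * (ωN * tt (2*k+1) ^ N)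
              + m * (ωN * (tt (2*k+2) ^ N - tt (2*k+1) ^ N))) := hballT k
      have h5 : (2:ENNReal) * (ENNReal.ofReal (m * ωN)
            * ν (ball (0 : EuclideanSpace ℝ (Fin N)) (tt (2*k+2))))
          ≤ ENNReal.ofReal (2 * ((m * ωN) * (M * (ωN * tt (2*k+1) ^ N)
              + m * (ωN * (tt (2*k+2) ^ N - tt (2*k+1) ^ N))))) := by
        rw [ENNReal.ofReal_mul (by norm_num : (0:ℝ) ≤ 2),
          ENNReal.ofReal_mul (mul_nonneg hm.le hω0.le), ENNReal.ofReal_ofNat]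
        exact mul_le_mul_right (mul_le_mul_right h4 _) _
      simp only [hΦ, hll, hc]
      rw [h1, ENNReal.ofReal_mul (inv_nonneg.2 (pow_nonneg (hRpos k).le N))]
      exact mul_le_mul_right (le_trans h2 h5) _
    have hσ : Tendsto (fun k : ℕ => tt (2*k+1) / (tt (2*k+2) - 1)) atTop (𝓝 0) := by
      apply ratio_tendsto_zero
        (fun k => div_nonneg (tt_pos _).le (hRpos k).le)
      intro k
      have h1 := tt_ge (2*k+1)
      have h2 := tt_succ (2*k+1)
      have h3 := tt_pos (2*k+1)
      rw [div_le_div_iff₀ (hRpos k) (by positivity)]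
      have hk : (k:ℝ) + 2 ≤ tt (2*k+1) := by
        have h4 : ((2*k+1 : ℕ):ℝ) + 2 ≤ tt (2*k+1) := h1
        push_cast at h4 ⊢
        linarith
      rw [h2]
      nlinarith
    have hτ : Tendsto (fun k : ℕ => tt (2*k+2) / (tt (2*k+2) - 1)) atTop (𝓝 1) := by
      have hid : ∀ k : ℕ, 1 + 1 / (tt (2*k+2) - 1) = tt (2*k+2) / (tt (2*k+2) - 1) := by
        intro k
        have h4 : tt (2*k+2) - 1 ≠ 0 := (hRpos k).ne'
        field_simp
        ring
      have h0 : Tendsto (fun k : ℕ => 1 / (tt (2*k+2) - 1)) atTop (𝓝 0) := by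
        apply inv_seq_tendsto
        intro k
        have h4 : ((2*k+2 : ℕ):ℝ) + 2 ≤ tt (2*k+2) := tt_ge (2*k+2)
        push_cast at h4 ⊢
        linarith
      have := (tendsto_const_nhds (x := (1:ℝ))).add h0
      rw [add_zero] at this
      exact Tendsto.congr hid this
    have hc_tendsto : Tendsto c atTop (𝓝 (2 * m ^ 2 * ωN ^ 2)) := by
      have hid : ∀ k : ℕ,
          2 * m * ωN ^ 2 * (M * (tt (2*k+1) / (tt (2*k+2) - 1)) ^ N
              + m * ((tt (2*k+2) / (tt (2*k+2) - 1)) ^ N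
                - (tt (2*k+1) / (tt (2*k+2) - 1)) ^ N)) = c k := by
        intro k
        simp only [hc]
        have h4 : tt (2*k+2) - 1 ≠ 0 := (hRpos k).ne'
        simp only [div_pow]
        field_simp
      have hcomb := (tendsto_const_nhds (x := 2 * m * ωN ^ 2)).mul
        (((tendsto_const_nhds (x := M)).mul (hσ.pow N)).add
          ((tendsto_const_nhds (x := m)).mul ((hτ.pow N).sub (hσ.pow N))))
      have hval : 2 * m * ωN ^ 2 * (M * (0:ℝ) ^ N + m * ((1:ℝ) ^ N - 0 ^ N))
          = 2 * m ^ 2 * ωN ^ 2 := by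
        rw [one_pow, zero_pow hN.ne']
        ring
      rw [hval] at hcomb
      exact Tendsto.congr hid hcomb
    have hllt : Tendsto ll atTop (𝓝[>] (0:ℝ)) := by
      rw [tendsto_nhdsWithin_iff]
      constructor
      · have hmono : ∀ k : ℕ, k ≤ 2*k+2 := fun k => by omega
        have hg : Tendsto (fun k : ℕ => 2*k+2) atTop atTop :=
          tendsto_atTop_mono hmono tendsto_id
        have h1 : Tendsto (fun k : ℕ => tt (2*k+2) - 1) atTop atTop := by
          have h2 := tendsto_atTop_add_const_right atTop (-1) (tt_tendsto.comp hg)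
          simpa [sub_eq_add_neg] using h2
        exact (tendsto_rpow_neg_atTop hNp).comp h1
      · exact Eventually.of_forall fun k => Set.mem_Ioi.2 (Real.rpow_pos_of_pos (hRpos k) _)
    calc liminf Φ (𝓝[>] 0) ≤ liminf Φ (map ll atTop) := liminf_le_liminf_of_le hllt
      _ = liminf (fun k => Φ (ll k)) atTop := (liminf_comp Φ ll atTop).symm
      _ ≤ liminf (fun k => ENNReal.ofReal (c k)) atTop :=
          liminf_le_liminf (Eventually.of_forall hΦub)
      _ = ENNReal.ofReal (2 * m ^ 2 * ωN ^ 2) :=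
          (ENNReal.tendsto_ofReal hc_tendsto).liminf_eq
end
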